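/- arXiv:1006.2006 — 9 statements merged into one kernel-verified Lean document; each statement's English description precedes it below -/
import Mathlib

section
/- Let q ≥ 2 and let p be a probability distribution on a finite set X with |X| = q. Then the L1 distance between p and the uniform distribution satisfies ‖p − unif‖₁ ≥ (1 − H(p))/(q·log e), where H(p) is the Shannon entropy of p in base q (so H(p) ∈ [0,1]) and log e = 1/ln q. -/
/-!
`(1 - H(p)) · ln q = ∑ pᵢ ln (q pᵢ)` is the Kullback–Leibler divergence of `p` from the uniform
distribution. By `ln x ≤ x - 1` it is at most the χ²-divergence `q ∑ (pᵢ - 1/q)²`, and since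
`|pᵢ - 1/q| ≤ 1` every square is at most the corresponding absolute value.
-/

open Finset Real

section
variable {X : Type*} [Fintype X]

theorem one_sub_entropy_mul_log_eq {q : ℝ} (hq : log q ≠ 0) {p : X → ℝ}
    (hp1 : ∑ i, p i = 1) :
    (1 - (-∑ i, p i * logb q (p i))) * log q = ∑ i, p i * log (q * p i) := by
  have hq0 : q ≠ 0 := by rintro rfl; simp at hq
  have hterm : ∀ i, p i * log (q * p i) = p i * log q + p i * logb q (p i) * log q := by
    intro i
    rcases eq_or_ne (p i) 0 with h | h
    · simp [h]
    · rw [log_mul hq0 h, mul_assoc, logb, div_mul_cancel₀ _ hq]; ring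
  simp only [hterm, sum_add_distrib, ← sum_mul, hp1]
  ring

theorem mul_log_mul_le {c x : ℝ} (hc : 0 < c) (hx : 0 ≤ x) :
    x * log (c * x) ≤ x * (c * x - 1) := by
  rcases hx.eq_or_lt with rfl | hx
  · simp
  · exact mul_le_mul_of_nonneg_left (log_le_sub_one_of_pos (by positivity)) hx.le

/-- KL divergence from the uniform distribution is at most the χ²-divergence. -/
theorem sum_mul_log_mul_le_mul_sum_sq {q : ℝ} (hq : 0 < q) (hcard : (Fintype.card X : ℝ) = q)
    {p : X → ℝ} (hp0 : ∀ i, 0 ≤ p i) (hp1 : ∑ i, p i = 1) :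
    ∑ i, p i * log (q * p i) ≤ q * ∑ i, (p i - 1 / q) ^ 2 := by
  have hchi : ∀ i, q * (p i - 1 / q) ^ 2 = p i * (q * p i - 1) - (p i - 1 / q) := by
    intro i; field_simp
  calc ∑ i, p i * log (q * p i) ≤ ∑ i, p i * (q * p i - 1) :=
        sum_le_sum fun i _ => mul_log_mul_le hq (hp0 i)
    _ = q * ∑ i, (p i - 1 / q) ^ 2 := by
        rw [mul_sum, sum_congr rfl fun i _ => hchi i, sum_sub_distrib, sum_sub_distrib, hp1,
          sum_const, card_univ, nsmul_eq_mul, hcard, mul_one_div_cancel hq.ne', sub_self, sub_zero]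

theorem sum_sq_le_sum_abs {f : X → ℝ} (hf : ∀ i, |f i| ≤ 1) :
    ∑ i, f i ^ 2 ≤ ∑ i, |f i| :=
  sum_le_sum fun i _ => by
    rw [← sq_abs]; exact pow_le_of_le_one (abs_nonneg _) (hf i) two_ne_zero

theorem le_one_of_sum_eq_one {p : X → ℝ} (hp0 : ∀ i, 0 ≤ p i) (hp1 : ∑ i, p i = 1) (i : X) :
    p i ≤ 1 :=
  hp1 ▸ single_le_sum (fun j _ => hp0 j) (mem_univ i)

end

/-- For a probability distribution `p` on a finite set of size `q ≥ 2`,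
`‖p − unif‖₁ ≥ (1 − H(p))/(q·log e)`, where `H` is the entropy in base `q` and
`log e = 1/ln q`, i.e. `∑ i, |p i − 1/q| ≥ (1 − H(p)) · ln q / q`. -/
theorem stmt0 {X : Type*} [Fintype X] (q : ℕ) (hq : 2 ≤ q)
    (hcard : Fintype.card X = q)
    (p : X → ℝ) (hp0 : ∀ i, 0 ≤ p i) (hp1 : ∑ i, p i = 1) :
    ∑ i, |p i - 1 / (q : ℝ)| ≥
      (1 - (-∑ i, p i * Real.logb q (p i))) * Real.log q / q := by
  have hq1 : (1 : ℝ) < q := by exact_mod_cast hq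
  have hq0 : (0 : ℝ) < q := by linarith
  have hdev : ∀ i, |p i - 1 / (q : ℝ)| ≤ 1 := fun i =>
    abs_sub_le_of_nonneg_of_le (hp0 i) (le_one_of_sum_eq_one hp0 hp1 i) (by positivity)
      (div_le_one_of_le₀ hq1.le hq0.le)
  rw [ge_iff_le, div_le_iff₀ hq0, one_sub_entropy_mul_log_eq (log_pos hq1).ne' hp1]
  calc ∑ i, p i * log (q * p i) ≤ q * ∑ i, (p i - 1 / (q : ℝ)) ^ 2 :=
        sum_mul_log_mul_le_mul_sum_sq hq0 (by exact_mod_cast hcard) hp0 hp1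
    _ ≤ q * ∑ i, |p i - 1 / (q : ℝ)| := mul_le_mul_of_nonneg_left (sum_sq_le_sum_abs hdev) hq0.le
    _ = (∑ i, |p i - 1 / (q : ℝ)|) * q := mul_comm _ _
end

section
/- Let q be prime and let p be a probability distribution on ℤ/qℤ with entropy H(p) (base q). For i ∈ ℤ/qℤ let p_i denote the cyclic shift p_i(m) = p(m − i). Then for all i ≠ j in ℤ/qℤ, ‖p_i − p_j‖₁ ≥ (1 − H(p)) / (2q²(q−1)·log e), where log e = 1/ln q. -/
/-- For prime `q` and a probability distribution `p` on `ℤ/qℤ`, for all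
`i ≠ j` the cyclic shifts `p_i(m) = p(m−i)` satisfy
`‖p_i − p_j‖₁ ≥ (1 − H(p)) / (2q²(q−1)·log e)`, i.e.
`∑ k, |p(k−i) − p(k−j)| ≥ (1 − H(p))·ln q / (2q²(q−1))`, `H` in base `q`. -/
theorem stmt5 (q : ℕ) [NeZero q] (hq : q.Prime) (p : ZMod q → ℝ)
    (hp0 : ∀ i, 0 ≤ p i) (hp1 : ∑ i, p i = 1) (i j : ZMod q) (hij : i ≠ j) :
    ∑ k, |p (k - i) - p (k - j)| ≥
      (1 - (-∑ m, p m * Real.logb q (p m))) * Real.log q /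
        (2 * (q : ℝ) ^ 2 * ((q : ℝ) - 1)) := by
  haveI : Fact q.Prime := ⟨hq⟩
  have hq2 : 2 ≤ q := hq.two_le
  have hqR : (2:ℝ) ≤ q := by exact_mod_cast hq2
  have hq0 : (0:ℝ) < q := by linarith
  set D := ∑ k, |p (k - i) - p (k - j)| with hDdef
  have hDnn : 0 ≤ D := Finset.sum_nonneg fun k _ => abs_nonneg _
  set d := i - j with hd
  have hdne : d ≠ 0 := sub_ne_zero.mpr hij
  have hstep : ∀ x : ZMod q, |p x - p (x + d)| ≤ D := by
    intro x
    have h1 : |p ((x+i) - i) - p ((x+i) - j)| ≤ D :=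
      Finset.single_le_sum (f := fun k => |p (k - i) - p (k - j)|)
        (fun k _ => abs_nonneg _) (Finset.mem_univ (x+i))
    have e1 : (x+i) - i = x := by ring
    have e2 : (x+i) - j = x + d := by rw [hd]; ring
    rwa [e1, e2] at h1
  have hchain : ∀ (m : ℕ) (x : ZMod q), |p x - p (x + m • d)| ≤ m * D := by
    intro m
    induction m with
    | zero => intro x; simp
    | succ n ih =>
      intro x
      have h1 := ih (x + d)
      have h2 := hstep x
      have e : x + (n+1) • d = (x + d) + n • d := by
        rw [succ_nsmul]; ring
      calc |p x - p (x + (n+1) • d)|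
          ≤ |p x - p (x+d)| + |p (x+d) - p (x + (n+1) • d)| := abs_sub_le _ _ _
        _ = |p x - p (x+d)| + |p (x+d) - p ((x+d) + n • d)| := by rw [e]
        _ ≤ D + n * D := add_le_add h2 h1
        _ = (n+1 : ℕ) * D := by push_cast; ring
  have hclose : ∀ a b : ZMod q, |p a - p b| ≤ ((q:ℝ) - 1) * D := by
    intro a b
    set m : ZMod q := (b - a) * d⁻¹ with hm
    have hmd : m * d = b - a := by
      rw [hm, mul_assoc, inv_mul_cancel₀ hdne, mul_one]
    have hb : b = a + m.val • d := by
      rw [nsmul_eq_mul, ZMod.natCast_val, ZMod.cast_id, hmd]; ring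
    have h1 : |p a - p (a + m.val • d)| ≤ m.val * D := hchain m.val a
    rw [← hb] at h1
    refine h1.trans (mul_le_mul_of_nonneg_right ?_ hDnn)
    have hlt : m.val < q := ZMod.val_lt m
    have : (m.val : ℝ) + 1 ≤ q := by exact_mod_cast hlt
    linarith
  have habs2 : ∀ a : ZMod q, |p a - 1/(q:ℝ)| ≤ ((q:ℝ)-1) * D := by
    intro a
    have hsum : ∑ b : ZMod q, (p a - p b) = q * p a - 1 := by
      rw [Finset.sum_sub_distrib, hp1, Finset.sum_const, Finset.card_univ, ZMod.card]
      simp [nsmul_eq_mul]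
    have h1 : p a - 1/(q:ℝ) = (1/(q:ℝ)) * ∑ b : ZMod q, (p a - p b) := by
      rw [hsum]; field_simp
    rw [h1, abs_mul, abs_of_pos (by positivity : (0:ℝ) < 1/(q:ℝ))]
    have h2 : |∑ b : ZMod q, (p a - p b)| ≤ ∑ b : ZMod q, |p a - p b| :=
      Finset.abs_sum_le_sum_abs _ _
    have h3 : ∑ b : ZMod q, |p a - p b| ≤ (q:ℝ) * (((q:ℝ)-1) * D) := by
      calc ∑ b : ZMod q, |p a - p b| ≤ ∑ _b : ZMod q, ((q:ℝ)-1) * D :=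
            Finset.sum_le_sum fun b _ => hclose a b
        _ = (q:ℝ) * (((q:ℝ)-1) * D) := by
            rw [Finset.sum_const, Finset.card_univ, ZMod.card, nsmul_eq_mul]
    calc 1/(q:ℝ) * |∑ b : ZMod q, (p a - p b)| ≤ 1/(q:ℝ) * ((q:ℝ) * (((q:ℝ)-1) * D)) := by
          apply mul_le_mul_of_nonneg_left (h2.trans h3) (by positivity)
      _ = ((q:ℝ)-1) * D := by field_simp
  have hL1 : ∑ k : ZMod q, |p k - 1/(q:ℝ)| ≤ 2 := by
    calc ∑ k : ZMod q, |p k - 1/(q:ℝ)| ≤ ∑ k : ZMod q, (p k + 1/(q:ℝ)) := by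
          refine Finset.sum_le_sum fun k _ => ?_
          rw [sub_eq_add_neg]
          refine (abs_add_le _ _).trans ?_
          rw [abs_neg, abs_of_nonneg (hp0 k), abs_of_pos (by positivity : (0:ℝ) < 1/(q:ℝ))]
      _ = 2 := by
          rw [Finset.sum_add_distrib, hp1, Finset.sum_const, Finset.card_univ, ZMod.card,
            nsmul_eq_mul]
          field_simp
          norm_num
  have hsq : ∑ k : ZMod q, (p k - 1/(q:ℝ))^2 ≤ (((q:ℝ)-1) * D) * 2 := by
    calc ∑ k : ZMod q, (p k - 1/(q:ℝ))^2
        = ∑ k : ZMod q, |p k - 1/(q:ℝ)| * |p k - 1/(q:ℝ)| := by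
          refine Finset.sum_congr rfl fun k _ => ?_
          rw [abs_mul_abs_self]
          ring
      _ ≤ ∑ k : ZMod q, (((q:ℝ)-1) * D) * |p k - 1/(q:ℝ)| :=
          Finset.sum_le_sum fun k _ => mul_le_mul_of_nonneg_right (habs2 k) (abs_nonneg _)
      _ = (((q:ℝ)-1) * D) * ∑ k : ZMod q, |p k - 1/(q:ℝ)| := by rw [← Finset.mul_sum]
      _ ≤ (((q:ℝ)-1) * D) * 2 := by
          apply mul_le_mul_of_nonneg_left hL1
          apply mul_nonneg (by linarith) hDnn
  have hexp : ∑ k : ZMod q, (p k - 1/(q:ℝ))^2 = (∑ k : ZMod q, (p k)^2) - 1/(q:ℝ) := by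
    have e : ∀ k : ZMod q, (p k - 1/(q:ℝ))^2 = (p k)^2 - (2/(q:ℝ)) * p k + 1/(q:ℝ)^2 := by
      intro k; field_simp; ring
    rw [Finset.sum_congr rfl fun k _ => e k, Finset.sum_add_distrib, Finset.sum_sub_distrib,
      ← Finset.mul_sum, hp1, Finset.sum_const, Finset.card_univ, ZMod.card, nsmul_eq_mul]
    field_simp
    ring
  have hKL : Real.log q + ∑ k : ZMod q, p k * Real.log (p k) ≤ (q:ℝ) * ∑ k : ZMod q, (p k)^2 - 1 := by
    have hpt : ∀ k : ZMod q, p k * Real.log q + p k * Real.log (p k) ≤ (q:ℝ) * (p k)^2 - p k := by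
      intro k
      rcases eq_or_lt_of_le (hp0 k) with h | h
      · simp [← h]
      · have h1 : Real.log ((q:ℝ) * p k) ≤ (q:ℝ) * p k - 1 :=
          Real.log_le_sub_one_of_pos (by positivity)
        have h2 : Real.log ((q:ℝ) * p k) = Real.log q + Real.log (p k) :=
          Real.log_mul (by positivity) h.ne'
        nlinarith
    calc Real.log q + ∑ k : ZMod q, p k * Real.log (p k)
        = ∑ k : ZMod q, (p k * Real.log q + p k * Real.log (p k)) := by
          rw [Finset.sum_add_distrib, ← Finset.sum_mul, hp1, one_mul]
      _ ≤ ∑ k : ZMod q, ((q:ℝ) * (p k)^2 - p k) := Finset.sum_le_sum fun k _ => hpt k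
      _ = (q:ℝ) * ∑ k : ZMod q, (p k)^2 - 1 := by
          rw [Finset.sum_sub_distrib, ← Finset.mul_sum, hp1]
  have hlogq : Real.log q ≠ 0 := by
    have : (1:ℝ) < q := by linarith
    exact ne_of_gt (Real.log_pos this)
  have hH : (1 - (-∑ m, p m * Real.logb q (p m))) * Real.log q
      = Real.log q + ∑ m, p m * Real.log (p m) := by
    have e : ∀ m : ZMod q, p m * Real.logb q (p m) * Real.log q = p m * Real.log (p m) := by
      intro m
      rw [Real.logb]; field_simp
    rw [sub_neg_eq_add, add_mul, one_mul, Finset.sum_mul, Finset.sum_congr rfl fun m _ => e m]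
  rw [ge_iff_le, div_le_iff₀ (by nlinarith : (0:ℝ) < 2 * (q:ℝ)^2 * ((q:ℝ)-1))]
  rw [hH]
  have hfin : (q:ℝ) * ∑ k : ZMod q, (p k)^2 - 1 ≤ 2 * (q:ℝ) * (((q:ℝ)-1) * D) := by
    have h1 : (q:ℝ) * (∑ k : ZMod q, (p k - 1/(q:ℝ))^2) ≤ (q:ℝ) * ((((q:ℝ)-1) * D) * 2) :=
      mul_le_mul_of_nonneg_left hsq hq0.le
    rw [hexp] at h1
    have h2 : (q:ℝ) * ((∑ k : ZMod q, (p k)^2) - 1/(q:ℝ)) = (q:ℝ) * (∑ k : ZMod q, (p k)^2) - 1 := by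
      field_simp
    rw [h2] at h1
    linarith
  nlinarith [mul_nonneg hDnn (mul_nonneg (by linarith : (0:ℝ) ≤ 2*(q:ℝ)) (sq_nonneg ((q:ℝ)-1)))]
end

section
/- Let q be prime, m ∈ ℤ/qℤ nonzero, and let p be a probability distribution on ℤ/qℤ. Then there exists k ∈ ℤ/qℤ such that p(k) − p(k+m) ≥ (1 − H(p)) / (2q²(q−1)·log e). -/
set_option maxHeartbeats 800000

private lemma stmt6_tele {q : ℕ} (p : ZMod q → ℝ) (m : ZMod q) (D : ℝ)
    (hD : ∀ k : ZMod q, p k - p (k + m) ≤ D) :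
    ∀ j : ℕ, ∀ k : ZMod q, p k - p (k + j • m) ≤ j * D := by
  intro j
  induction j with
  | zero => intro k; simp
  | succ n ih =>
    intro k
    have h1 := ih k
    have h2 := hD (k + n • m)
    have he : k + (n + 1) • m = k + n • m + m := by
      rw [succ_nsmul, add_assoc]
    rw [he]
    push_cast
    linarith

/-- For prime `q`, nonzero `m : ℤ/qℤ`, and a probability distribution
`p` on `ℤ/qℤ`, there exists `k` with
`p(k) − p(k+m) ≥ (1 − H(p)) / (2q²(q−1)·log e)`, i.e.
`p k − p (k+m) ≥ (1 − H(p))·ln q / (2q²(q−1))`, `H` in base `q`. -/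
theorem stmt6 (q : ℕ) [NeZero q] (hq : q.Prime) (m : ZMod q) (hm : m ≠ 0)
    (p : ZMod q → ℝ) (hp0 : ∀ i, 0 ≤ p i) (hp1 : ∑ i, p i = 1) :
    ∃ k : ZMod q, p k - p (k + m) ≥
      (1 - (-∑ x, p x * Real.logb q (p x))) * Real.log q /
        (2 * (q : ℝ) ^ 2 * ((q : ℝ) - 1)) := by
  haveI : Fact q.Prime := ⟨hq⟩
  have hq2 : 2 ≤ q := hq.two_le
  have hq1R : (1 : ℝ) < q := by exact_mod_cast hq.one_lt
  have hq0R : (0 : ℝ) < q := by linarith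
  have hlogq : 0 < Real.log q := Real.log_pos hq1R
  have hcard : (Finset.univ : Finset (ZMod q)).card = q := by
    simp [ZMod.card]
  -- max gap
  obtain ⟨k₀, -, hk₀⟩ := Finset.exists_max_image (Finset.univ : Finset (ZMod q))
    (fun k => p k - p (k + m)) ⟨0, Finset.mem_univ 0⟩
  set D : ℝ := p k₀ - p (k₀ + m) with hDdef
  have hDmax : ∀ k : ZMod q, p k - p (k + m) ≤ D := fun k => hk₀ k (Finset.mem_univ k)
  -- D ≥ 0
  have hsum_shift : ∑ k : ZMod q, p (k + m) = ∑ k : ZMod q, p k :=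
    Fintype.sum_equiv (Equiv.addRight m) _ _ (fun x => rfl)
  have hsum_gap : ∑ k : ZMod q, (p k - p (k + m)) = 0 := by
    rw [Finset.sum_sub_distrib, hsum_shift, sub_self]
  have hD0 : 0 ≤ D := by
    by_contra h
    push_neg at h
    have : ∑ k : ZMod q, (p k - p (k + m)) < ∑ k : ZMod q, (0 : ℝ) := by
      apply Finset.sum_lt_sum_of_nonempty ⟨0, Finset.mem_univ 0⟩
      intro k _
      exact lt_of_le_of_lt (hDmax k) h
    simp [hsum_gap] at this
  -- max and min of p
  obtain ⟨kM, -, hkM⟩ := Finset.exists_max_image (Finset.univ : Finset (ZMod q))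
    p ⟨0, Finset.mem_univ 0⟩
  obtain ⟨kL, -, hkL⟩ := Finset.exists_min_image (Finset.univ : Finset (ZMod q))
    p ⟨0, Finset.mem_univ 0⟩
  set M : ℝ := p kM with hMdef
  set L : ℝ := p kL with hLdef
  have hM : ∀ k, p k ≤ M := fun k => hkM k (Finset.mem_univ k)
  have hL : ∀ k, L ≤ p k := fun k => hkL k (Finset.mem_univ k)
  have hM1 : M ≤ 1 := by
    have := Finset.single_le_sum (f := p) (fun i _ => hp0 i) (Finset.mem_univ kM)
    rwa [hp1] at this
  have hL0 : 0 ≤ L := hp0 kL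
  -- 1/q between L and M
  have hLq : L ≤ 1 / q := by
    have h1 : (Finset.univ : Finset (ZMod q)).card • L ≤ ∑ k : ZMod q, p k :=
      Finset.card_nsmul_le_sum _ _ _ (fun k _ => hL k)
    rw [hcard, hp1, nsmul_eq_mul] at h1
    rw [le_div_iff₀ hq0R]
    linarith
  have hMq : 1 / (q : ℝ) ≤ M := by
    have h1 : ∑ k : ZMod q, p k ≤ (Finset.univ : Finset (ZMod q)).card • M :=
      Finset.sum_le_card_nsmul _ _ _ (fun k _ => hM k)
    rw [hcard, hp1, nsmul_eq_mul] at h1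
    rw [div_le_iff₀ hq0R]
    linarith
  -- M - L ≤ (q-1) * D
  have hML : M - L ≤ ((q : ℝ) - 1) * D := by
    set j : ℕ := ((kL - kM) * m⁻¹).val with hjdef
    have hjlt : j < q := ZMod.val_lt _
    have hjcast : (j : ZMod q) = (kL - kM) * m⁻¹ := by
      rw [hjdef, ZMod.natCast_val, ZMod.cast_id]
    have hjm : kM + j • m = kL := by
      rw [nsmul_eq_mul, hjcast, mul_assoc, inv_mul_cancel₀ hm, mul_one]
      ring
    have htel := stmt6_tele p m D hDmax j kM
    rw [hjm] at htel
    have hjR : (j : ℝ) ≤ (q : ℝ) - 1 := by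
      have : (j : ℝ) + 1 ≤ q := by exact_mod_cast hjlt
      linarith
    calc M - L ≤ (j : ℝ) * D := htel
      _ ≤ ((q : ℝ) - 1) * D := by nlinarith
  -- KL rewrite
  have hKL : (1 - (-∑ x, p x * Real.logb q (p x))) * Real.log q
      = ∑ x : ZMod q, (p x * Real.log q + p x * Real.log (p x)) := by
    have h1 : ∑ x : ZMod q, p x * Real.log q = Real.log q := by
      rw [← Finset.sum_mul, hp1, one_mul]
    have h2 : ∑ x : ZMod q, p x * Real.log (p x)
        = (∑ x : ZMod q, p x * Real.logb q (p x)) * Real.log q := by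
      rw [Finset.sum_mul]
      apply Finset.sum_congr rfl
      intro x _
      rw [Real.logb]
      field_simp
    rw [Finset.sum_add_distrib, h1, h2]
    ring
  -- pointwise bound
  have hpt : ∀ x : ZMod q, p x * Real.log q + p x * Real.log (p x)
      ≤ (q : ℝ) * (p x) ^ 2 - p x := by
    intro x
    rcases eq_or_lt_of_le (hp0 x) with h | h
    · simp [← h]
    · have hlog : Real.log ((q : ℝ) * p x) ≤ (q : ℝ) * p x - 1 :=
        Real.log_le_sub_one_of_pos (by positivity)
      rw [Real.log_mul (ne_of_gt hq0R) (ne_of_gt h)] at hlog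
      nlinarith [h.le]
  have hKLbound : (1 - (-∑ x, p x * Real.logb q (p x))) * Real.log q
      ≤ (q : ℝ) * ∑ x : ZMod q, (p x) ^ 2 - 1 := by
    rw [hKL]
    calc ∑ x : ZMod q, (p x * Real.log q + p x * Real.log (p x))
        ≤ ∑ x : ZMod q, ((q : ℝ) * (p x) ^ 2 - p x) :=
          Finset.sum_le_sum (fun x _ => hpt x)
      _ = (q : ℝ) * ∑ x : ZMod q, (p x) ^ 2 - 1 := by
          rw [Finset.sum_sub_distrib, ← Finset.mul_sum, hp1]
  -- variance form
  have hvar : (q : ℝ) * ∑ x : ZMod q, (p x) ^ 2 - 1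
      = (q : ℝ) * ∑ x : ZMod q, (p x - 1 / q) ^ 2 := by
    have : ∑ x : ZMod q, (p x - 1 / q) ^ 2
        = ∑ x : ZMod q, ((p x) ^ 2 - (2 / q) * p x + (1 / q) ^ 2) := by
      apply Finset.sum_congr rfl
      intro x _
      field_simp
      ring
    rw [this, Finset.sum_add_distrib, Finset.sum_sub_distrib, ← Finset.mul_sum, hp1,
      Finset.sum_const, hcard, nsmul_eq_mul]
    field_simp
    ring
  have hvarbound : ∑ x : ZMod q, (p x - 1 / q) ^ 2 ≤ (q : ℝ) * (M - L) ^ 2 := by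
    calc ∑ x : ZMod q, (p x - 1 / q) ^ 2
        ≤ ∑ _x : ZMod q, (M - L) ^ 2 := by
          apply Finset.sum_le_sum
          intro x _
          apply sq_le_sq'
          · have := hL x; linarith
          · have := hM x; linarith
      _ = (q : ℝ) * (M - L) ^ 2 := by
          rw [Finset.sum_const, hcard, nsmul_eq_mul]
  -- assemble
  refine ⟨k₀, ?_⟩
  have hden : (0 : ℝ) < 2 * (q : ℝ) ^ 2 * ((q : ℝ) - 1) :=
    mul_pos (by positivity) (by linarith)
  rw [ge_iff_le, div_le_iff₀ hden]
  have hG0 : 0 ≤ M - L := by have := hL kM; have := hM kL; linarith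
  have hG1 : M - L ≤ 1 := by linarith
  have hqD : 0 ≤ ((q : ℝ) - 1) * D := mul_nonneg (by linarith) hD0
  have h1 : (M - L) ^ 2 ≤ ((q : ℝ) - 1) * D := by
    nlinarith [mul_le_mul_of_nonneg_left hML hG0, mul_le_mul_of_nonneg_right hG1 hqD]
  have step : (q : ℝ) * ((q : ℝ) * (M - L) ^ 2) ≤ (q : ℝ) ^ 2 * (((q : ℝ) - 1) * D) := by
    nlinarith [mul_le_mul_of_nonneg_left h1 (sq_nonneg (q : ℝ))]
  calc (1 - (-∑ x, p x * Real.logb q (p x))) * Real.log q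
      ≤ (q : ℝ) * ∑ x : ZMod q, (p x) ^ 2 - 1 := hKLbound
    _ = (q : ℝ) * ∑ x : ZMod q, (p x - 1 / q) ^ 2 := hvar
    _ ≤ (q : ℝ) * ((q : ℝ) * (M - L) ^ 2) :=
        mul_le_mul_of_nonneg_left hvarbound hq0R.le
    _ ≤ (q : ℝ) ^ 2 * (((q : ℝ) - 1) * D) := step
    _ ≤ D * (2 * (q : ℝ) ^ 2 * ((q : ℝ) - 1)) := by
        nlinarith [mul_nonneg (mul_nonneg (sq_nonneg (q : ℝ)) (by linarith : (0:ℝ) ≤ (q:ℝ) - 1)) hD0]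
end

section
/- Let q be prime and η > 0. There exists ε₁(η) > 0, depending only on η and q, such that for all probability distributions p, r on ℤ/qℤ with H(p) ≥ η and H(r) ≤ 1 − η (entropies in base q), one has H(p ∗ r) ≥ H(r) + ε₁(η). -/
/-- Entropy in base `q` of a distribution on a finite type. -/
noncomputable def entq {X : Type*} [Fintype X] (q : ℕ) (p : X → ℝ) : ℝ :=
  -∑ i, p i * Real.logb q (p i)

/-- Cyclic convolution of two distributions on `ℤ/qℤ`. -/
noncomputable def cconv (q : ℕ) [NeZero q] (p r : ZMod q → ℝ) : ZMod q → ℝ :=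
  fun m => ∑ i, p i * r (m - i)

lemma entq_eq {X : Type*} [Fintype X] (q : ℕ) (p : X → ℝ) :
    entq q p = (∑ i, Real.negMulLog (p i)) / Real.log q := by
  rw [entq, Finset.sum_div, ← Finset.sum_neg_distrib]
  exact Finset.sum_congr rfl fun i _ => by rw [Real.negMulLog, Real.logb]; ring

open Finset in
lemma key_strict (q : ℕ) [NeZero q] (hq : q.Prime) (η : ℝ) (hη : 0 < η)
    (p r : ZMod q → ℝ) (hp : ∀ i, 0 ≤ p i) (hps : ∑ i, p i = 1)
    (hr : ∀ i, 0 ≤ r i) (hrs : ∑ i, r i = 1)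
    (hpe : η ≤ entq q p) (hre : entq q r ≤ 1 - η) :
    entq q r < entq q (cconv q p r) := by
  haveI := Fact.mk hq
  have hq1 : (1:ℝ) < q := by exact_mod_cast hq.one_lt
  have hlogq : 0 < Real.log q := Real.log_pos hq1
  rw [entq_eq, entq_eq, div_lt_div_iff_of_pos_right hlogq]
  -- pointwise Jensen
  have hm : ∀ m, ∑ i, p i * Real.negMulLog (r (m - i)) ≤ Real.negMulLog (cconv q p r m) := by
    intro m
    have := Real.concaveOn_negMulLog.le_map_sum (t := Finset.univ) (w := p)
      (p := fun i => r (m - i)) (fun i _ => hp i) hps (fun i _ => Set.mem_Ici.2 (hr _))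
    simpa [cconv, smul_eq_mul] using this
  have hsum : ∑ m, ∑ i, p i * Real.negMulLog (r (m - i)) = ∑ m, Real.negMulLog (r m) := by
    rw [Finset.sum_comm]
    have h1 : ∀ i : ZMod q, ∑ m, Real.negMulLog (r (m - i)) = ∑ m, Real.negMulLog (r m) :=
      fun i => Fintype.sum_equiv (Equiv.subRight i) _ _ (fun m => rfl)
    simp only [← Finset.mul_sum, h1, ← Finset.sum_mul, hps, one_mul]
  have hweak : ∑ m, Real.negMulLog (r m) ≤ ∑ m, Real.negMulLog (cconv q p r m) := by
    rw [← hsum]; exact Finset.sum_le_sum fun m _ => hm m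
  rcases lt_or_eq_of_le hweak with h | heq
  · exact h
  · -- equality case: derive a contradiction
    exfalso
    have hall : ∀ m, ∑ i, p i * Real.negMulLog (r (m - i)) = Real.negMulLog (cconv q p r m) := by
      have := (Finset.sum_eq_sum_iff_of_le (fun m _ => hm m)).mp (by rw [hsum, heq])
      exact fun m => this m (mem_univ m)
    -- p has two distinct support points
    have hsupp : ∃ i j : ZMod q, i ≠ j ∧ p i ≠ 0 ∧ p j ≠ 0 := by
      by_contra h
      push_neg at h
      obtain ⟨i₀, hi₀⟩ : ∃ i, p i ≠ 0 := by
        by_contra h'; push_neg at h'; simp [h'] at hps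
      have hz : ∀ j, j ≠ i₀ → p j = 0 := fun j hj => h i₀ j (Ne.symm hj) hi₀
      have hp1 : p i₀ = 1 := by
        rw [← hps, Finset.sum_eq_single i₀ (fun j _ hj => hz j hj) (by simp)]
      have hze : entq q p = 0 := by
        rw [entq]
        have : ∀ i, p i * Real.logb q (p i) = 0 := by
          intro i
          rcases eq_or_ne i i₀ with rfl | hne
          · simp [hp1]
          · simp [hz i hne]
        simp [this]
      linarith
    obtain ⟨i, j, hij, hpi, hpj⟩ := hsupp
    -- equality case of Jensen at each m
    have heqm : ∀ m, ∀ k : ZMod q, p k ≠ 0 → r (m - k) = cconv q p r m := by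
      intro m k hk
      have hiff := Real.strictConcaveOn_negMulLog.map_sum_eq_iff' (t := Finset.univ) (w := p)
        (p := fun i => r (m - i)) (fun i _ => hp i) hps (fun i _ => Set.mem_Ici.2 (hr _))
      have heq2 : Real.negMulLog (∑ i, p i • r (m - i)) = ∑ i, p i • Real.negMulLog (r (m - i)) := by
        simp only [smul_eq_mul]
        rw [hall m]; rfl
      have := hiff.mp heq2 k (mem_univ k) hk
      simpa [cconv, smul_eq_mul] using this
    set d : ZMod q := i - j with hd
    have hdne : d ≠ 0 := sub_ne_zero.mpr hij
    have hshift : ∀ x : ZMod q, r (x + d) = r x := by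
      intro x
      have h1 := heqm (x + i) i hpi
      have h2 := heqm (x + i) j hpj
      have e1 : x + i - i = x := by ring
      have e2 : x + i - j = x + d := by rw [hd]; ring
      rw [e1] at h1; rw [e2] at h2
      rw [h2, ← h1]
    have hiter : ∀ (n : ℕ) (x : ZMod q), r (x + n • d) = r x := by
      intro n
      induction n with
      | zero => simp
      | succ k ih =>
        intro x
        rw [succ_nsmul, ← add_assoc, hshift, ih]
    have hconst : ∀ c : ZMod q, r c = r 0 := by
      intro c
      have h1 : (((c * d⁻¹).val : ℕ) : ZMod q) * d = c := by
        rw [ZMod.natCast_val, ZMod.cast_id, mul_assoc, inv_mul_cancel₀ hdne, mul_one]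
      have := hiter (c * d⁻¹).val 0
      rwa [zero_add, nsmul_eq_mul, h1] at this
    have hq0 : (q:ℝ) ≠ 0 := by positivity
    have hr0 : r 0 = (q : ℝ)⁻¹ := by
      have : ∑ c : ZMod q, r c = (q : ℝ) * r 0 := by
        rw [Finset.sum_congr rfl fun c _ => hconst c, Finset.sum_const, Finset.card_univ,
          ZMod.card, nsmul_eq_mul]
      rw [hrs] at this
      field_simp at this ⊢
      linarith
    have hent1 : entq q r = 1 := by
      rw [entq]
      have hrc : ∀ c : ZMod q, r c = (q:ℝ)⁻¹ := fun c => (hconst c).trans hr0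
      rw [Finset.sum_congr rfl fun c _ => by rw [hrc c]]
      rw [Finset.sum_const, Finset.card_univ, ZMod.card, Real.logb_inv,
        Real.logb_self_eq_one hq1, nsmul_eq_mul]
      field_simp
    linarith

open Finset in
/-- For prime `q` and `η > 0` there is `ε₁(η) > 0`, depending only on
`η` and `q`, such that for all distributions `p, r` on `ℤ/qℤ` with `H(p) ≥ η` and
`H(r) ≤ 1 − η` (entropy in base `q`), `H(p ∗ r) ≥ H(r) + ε₁(η)`. -/
theorem stmt8 (q : ℕ) [NeZero q] (hq : q.Prime) (η : ℝ) (hη : 0 < η) :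
    ∃ ε > 0, ∀ p r : ZMod q → ℝ,
      (∀ i, 0 ≤ p i) → ∑ i, p i = 1 →
      (∀ i, 0 ≤ r i) → ∑ i, r i = 1 →
      η ≤ entq q p → entq q r ≤ 1 - η →
      entq q (cconv q p r) ≥ entq q r + ε := by
  classical
  set S : Set ((ZMod q → ℝ) × (ZMod q → ℝ)) :=
    {x | (∀ i, 0 ≤ x.1 i) ∧ (∑ i, x.1 i = 1) ∧ (∀ i, 0 ≤ x.2 i) ∧ (∑ i, x.2 i = 1) ∧
      η ≤ entq q x.1 ∧ entq q x.2 ≤ 1 - η} with hS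
  by_cases hne : S.Nonempty
  · have hce : Continuous fun p : ZMod q → ℝ => entq q p := by
      simp only [entq_eq]
      exact (continuous_finset_sum _ fun i _ =>
        Real.continuous_negMulLog.comp (continuous_apply i)).div_const _
    have hcc : Continuous fun x : (ZMod q → ℝ) × (ZMod q → ℝ) => cconv q x.1 x.2 := by
      apply continuous_pi; intro m
      apply continuous_finset_sum; intro i _
      exact ((continuous_apply i).comp continuous_fst).mul
        ((continuous_apply (m - i)).comp continuous_snd)
    have hcont : Continuous fun x : (ZMod q → ℝ) × (ZMod q → ℝ) =>
        entq q (cconv q x.1 x.2) - entq q x.2 :=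
      (hce.comp hcc).sub (hce.comp continuous_snd)
    have hclosed : IsClosed S := by
      have h1 : IsClosed {x : (ZMod q → ℝ) × (ZMod q → ℝ) | ∀ i, 0 ≤ x.1 i} := by
        rw [Set.setOf_forall]
        exact isClosed_iInter fun i =>
          isClosed_le continuous_const ((continuous_apply i).comp continuous_fst)
      have h2 : IsClosed {x : (ZMod q → ℝ) × (ZMod q → ℝ) | ∑ i, x.1 i = 1} :=
        isClosed_eq (continuous_finset_sum _ fun i _ => (continuous_apply i).comp continuous_fst)
          continuous_const
      have h3 : IsClosed {x : (ZMod q → ℝ) × (ZMod q → ℝ) | ∀ i, 0 ≤ x.2 i} := by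
        rw [Set.setOf_forall]
        exact isClosed_iInter fun i =>
          isClosed_le continuous_const ((continuous_apply i).comp continuous_snd)
      have h4 : IsClosed {x : (ZMod q → ℝ) × (ZMod q → ℝ) | ∑ i, x.2 i = 1} :=
        isClosed_eq (continuous_finset_sum _ fun i _ => (continuous_apply i).comp continuous_snd)
          continuous_const
      have h5 : IsClosed {x : (ZMod q → ℝ) × (ZMod q → ℝ) | η ≤ entq q x.1} :=
        isClosed_le continuous_const (hce.comp continuous_fst)
      have h6 : IsClosed {x : (ZMod q → ℝ) × (ZMod q → ℝ) | entq q x.2 ≤ 1 - η} :=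
        isClosed_le (hce.comp continuous_snd) continuous_const
      exact h1.inter (h2.inter (h3.inter (h4.inter (h5.inter h6))))
    have hsub : S ⊆ (Set.Icc (0 : ZMod q → ℝ) 1) ×ˢ (Set.Icc 0 1) := by
      rintro ⟨p, r⟩ ⟨hp, hps, hr, hrs, -, -⟩
      refine ⟨⟨Pi.le_def.mpr fun i => hp i, Pi.le_def.mpr fun i => ?_⟩,
        ⟨Pi.le_def.mpr fun i => hr i, Pi.le_def.mpr fun i => ?_⟩⟩
      · calc p i ≤ ∑ j, p j := Finset.single_le_sum (fun j _ => hp j) (mem_univ i)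
          _ = 1 := hps
      · calc r i ≤ ∑ j, r j := Finset.single_le_sum (fun j _ => hr j) (mem_univ i)
          _ = 1 := hrs
    have hcomp : IsCompact S :=
      (isCompact_Icc.prod isCompact_Icc).of_isClosed_subset hclosed hsub
    obtain ⟨x₀, hx₀S, hx₀⟩ := hcomp.exists_isMinOn hne hcont.continuousOn
    obtain ⟨h1, h2, h3, h4, h5, h6⟩ := hx₀S
    refine ⟨entq q (cconv q x₀.1 x₀.2) - entq q x₀.2, ?_, ?_⟩
    · have := key_strict q hq η hη x₀.1 x₀.2 h1 h2 h3 h4 h5 h6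
      linarith
    · intro p r hp hps hr hrs hpe hre
      have hmem : (p, r) ∈ S := ⟨hp, hps, hr, hrs, hpe, hre⟩
      have := isMinOn_iff.mp hx₀ (p, r) hmem
      simp only [ge_iff_le]
      linarith
  · exact ⟨1, one_pos, fun p r hp hps hr hrs hpe hre =>
      absurd ⟨(p, r), hp, hps, hr, hrs, hpe, hre⟩ hne⟩
end

section
/- Let X be a finite set and η, μ, d > 0. There exists ε > 0, depending only on X, η, μ, d, such that: for any probability distribution p on X with min_i ‖p − e_i‖₁ ≥ μ and any family of distributions (r_i)_{i∈X} with equal entropies H(r_i) = h for all i and pairwise L1 distances ‖r_i − r_j‖₁ ≥ d for i ≠ j, one has H(∑_i p(i) r_i) ≥ h + ε. -/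
open Real Finset

lemma stmt10_pos {X : Type*} [Fintype X] [DecidableEq X] [Nonempty X]
    (μ d : ℝ) (hμ : 0 < μ) (hd : 0 < d) (p : X → ℝ) (r : X → X → ℝ)
    (hp0 : ∀ i, 0 ≤ p i) (hp1 : ∑ i, p i = 1)
    (hfar : ∀ i : X, ∑ j, |p j - (if j = i then (1:ℝ) else 0)| ≥ μ)
    (hr0 : ∀ i m, 0 ≤ r i m) (hr1 : ∀ i, ∑ m, r i m = 1)
    (hent : ∀ i, ∑ m, Real.negMulLog (r i m)
        = ∑ m, Real.negMulLog (r (Classical.arbitrary X) m))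
    (hdist : ∀ i j, i ≠ j → ∑ m, |r i m - r j m| ≥ d) :
    ∑ m, Real.negMulLog (r (Classical.arbitrary X) m)
      < ∑ m, Real.negMulLog (∑ i, p i * r i m) := by
  classical
  set t : Finset X := Finset.univ.filter (fun i => 0 < p i) with ht
  have hpt : ∀ i, i ∉ t → p i = 0 := by
    intro i hi
    simp only [ht, mem_filter, mem_univ, true_and, not_lt] at hi
    exact le_antisymm hi (hp0 i)
  have hsum_t : ∑ i ∈ t, p i = 1 := by
    rw [← hp1]
    exact (Finset.sum_subset (Finset.subset_univ t)
      (fun i _ hi => hpt i hi)).symm ▸ rfl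
  have hsum_t' : ∑ i ∈ t, p i = 1 := by
    rw [← hp1]
    exact Finset.sum_subset (Finset.subset_univ t) (fun i _ hi => hpt i hi)
  -- find two distinct positive-weight indices
  obtain ⟨a, ha⟩ : ∃ a, 0 < p a := by
    by_contra hcon
    push_neg at hcon
    have : (∑ i, p i) ≤ 0 := Finset.sum_nonpos (fun i _ => hcon i)
    linarith [hp1]
  obtain ⟨b, hb, hba⟩ : ∃ b, 0 < p b ∧ b ≠ a := by
    by_contra hcon
    push_neg at hcon
    have hz : ∀ j, j ≠ a → p j = 0 := by
      intro j hj
      by_contra hj0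
      exact hj ((hcon j (lt_of_le_of_ne (hp0 j) (Ne.symm hj0))))
    have hpa : p a = 1 := by
      rw [← hp1, Finset.sum_eq_single a (fun j _ hj => hz j hj) (by simp)]
    have : ∑ j, |p j - (if j = a then (1:ℝ) else 0)| = 0 := by
      apply Finset.sum_eq_zero
      intro j _
      by_cases hj : j = a
      · simp [hj, hpa]
      · simp [hj, hz j hj]
    linarith [hfar a]
  have hat : a ∈ t := by simp [ht, ha]
  have hbt : b ∈ t := by simp [ht, hb]
  obtain ⟨m₀, hm₀⟩ : ∃ m, r a m ≠ r b m := by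
    by_contra hcon
    push_neg at hcon
    have : ∑ m, |r a m - r b m| = 0 :=
      Finset.sum_eq_zero (fun m _ => by simp [hcon m])
    have := hdist a b (Ne.symm hba)
    linarith
  have hmem : ∀ i m, r i m ∈ Set.Ici (0:ℝ) := fun i m => hr0 i m
  -- pointwise Jensen
  have hle : ∀ m, ∑ i ∈ t, p i * Real.negMulLog (r i m)
      ≤ Real.negMulLog (∑ i ∈ t, p i * r i m) := by
    intro m
    have := Real.strictConcaveOn_negMulLog.concaveOn.le_map_sum
      (t := t) (w := p) (p := fun i => r i m)
      (fun i hi => hp0 i) hsum_t' (fun i _ => hmem i m)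
    simpa [smul_eq_mul] using this
  have hlt : ∑ i ∈ t, p i * Real.negMulLog (r i m₀)
      < Real.negMulLog (∑ i ∈ t, p i * r i m₀) := by
    have := Real.strictConcaveOn_negMulLog.lt_map_sum
      (t := t) (w := p) (p := fun i => r i m₀)
      (fun i hi => by simpa [ht] using (Finset.mem_filter.mp hi).2)
      hsum_t' (fun i _ => hmem i m₀)
      ⟨a, hat, b, hbt, hm₀⟩
    simpa [smul_eq_mul] using this
  have key : ∑ m, ∑ i ∈ t, p i * Real.negMulLog (r i m)
      < ∑ m, Real.negMulLog (∑ i ∈ t, p i * r i m) :=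
    Finset.sum_lt_sum (fun m _ => hle m) ⟨m₀, Finset.mem_univ m₀, hlt⟩
  have e1 : ∀ m, (∑ i ∈ t, p i * r i m) = ∑ i, p i * r i m := by
    intro m
    exact Finset.sum_subset (Finset.subset_univ t)
      (fun i _ hi => by simp [hpt i hi])
  have e2 : ∑ m, ∑ i ∈ t, p i * Real.negMulLog (r i m)
      = ∑ m, Real.negMulLog (r (Classical.arbitrary X) m) := by
    rw [Finset.sum_comm]
    calc ∑ i ∈ t, ∑ m, p i * Real.negMulLog (r i m)
        = ∑ i ∈ t, p i * ∑ m, Real.negMulLog (r i m) := by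
          simp [Finset.mul_sum]
      _ = ∑ i ∈ t, p i * ∑ m, Real.negMulLog (r (Classical.arbitrary X) m) := by
          refine Finset.sum_congr rfl (fun i _ => by rw [hent i])
      _ = (∑ i ∈ t, p i) * ∑ m, Real.negMulLog (r (Classical.arbitrary X) m) := by
          rw [Finset.sum_mul]
      _ = ∑ m, Real.negMulLog (r (Classical.arbitrary X) m) := by
          rw [hsum_t', one_mul]
  calc ∑ m, Real.negMulLog (r (Classical.arbitrary X) m)
      = ∑ m, ∑ i ∈ t, p i * Real.negMulLog (r i m) := e2.symm
    _ < ∑ m, Real.negMulLog (∑ i ∈ t, p i * r i m) := key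
    _ = ∑ m, Real.negMulLog (∑ i, p i * r i m) := by
        refine Finset.sum_congr rfl (fun m _ => by rw [e1 m])

open Real Finset

section

variable {X : Type*} [Fintype X] [DecidableEq X] [Nonempty X]

lemma stmt10_aux (μ d : ℝ) (hμ : 0 < μ) (hd : 0 < d)
    (hpos : ∀ (p : X → ℝ) (r : X → X → ℝ),
      (∀ i, 0 ≤ p i) → ∑ i, p i = 1 →
      (∀ i : X, ∑ j, |p j - (if j = i then (1:ℝ) else 0)| ≥ μ) →
      (∀ i m, 0 ≤ r i m) → (∀ i, ∑ m, r i m = 1) →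
      (∀ i, ∑ m, Real.negMulLog (r i m)
          = ∑ m, Real.negMulLog (r (Classical.arbitrary X) m)) →
      (∀ i j, i ≠ j → ∑ m, |r i m - r j m| ≥ d) →
      ∑ m, Real.negMulLog (r (Classical.arbitrary X) m)
        < ∑ m, Real.negMulLog (∑ i, p i * r i m)) :
    ∃ ε > 0, ∀ (p : X → ℝ) (r : X → X → ℝ),
      (∀ i, 0 ≤ p i) → ∑ i, p i = 1 →
      (∀ i : X, ∑ j, |p j - (if j = i then (1:ℝ) else 0)| ≥ μ) →
      (∀ i m, 0 ≤ r i m) → (∀ i, ∑ m, r i m = 1) →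
      (∀ i, ∑ m, Real.negMulLog (r i m)
          = ∑ m, Real.negMulLog (r (Classical.arbitrary X) m)) →
      (∀ i j, i ≠ j → ∑ m, |r i m - r j m| ≥ d) →
      ∑ m, Real.negMulLog (∑ i, p i * r i m)
        ≥ ∑ m, Real.negMulLog (r (Classical.arbitrary X) m) + ε := by
  classical
  set i₀ := Classical.arbitrary X with hi₀
  -- the constraint set
  set K : Set ((X → ℝ) × (X → X → ℝ)) :=
    {z | (∀ i, 0 ≤ z.1 i) ∧ (∑ i, z.1 i = 1) ∧
      (∀ i : X, μ ≤ ∑ j, |z.1 j - (if j = i then (1:ℝ) else 0)|) ∧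
      (∀ i m, 0 ≤ z.2 i m) ∧ (∀ i, ∑ m, z.2 i m = 1) ∧
      (∀ i, ∑ m, Real.negMulLog (z.2 i m) = ∑ m, Real.negMulLog (z.2 i₀ m)) ∧
      (∀ i j, i ≠ j → d ≤ ∑ m, |z.2 i m - z.2 j m|)} with hK
  set F : ((X → ℝ) × (X → X → ℝ)) → ℝ :=
    fun z => ∑ m, Real.negMulLog (∑ i, z.1 i * z.2 i m)
      - ∑ m, Real.negMulLog (z.2 i₀ m) with hF
  have c1 : ∀ i : X, Continuous fun z : (X → ℝ) × (X → X → ℝ) => z.1 i :=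
    fun i => (continuous_apply i).comp continuous_fst
  have c2 : ∀ i m : X, Continuous fun z : (X → ℝ) × (X → X → ℝ) => z.2 i m :=
    fun i m => (continuous_apply m).comp ((continuous_apply i).comp continuous_snd)
  have cF : Continuous F := by
    apply Continuous.sub
    · exact continuous_finset_sum _ fun m _ =>
        Real.continuous_negMulLog.comp
          (continuous_finset_sum _ fun i _ => (c1 i).mul (c2 i m))
    · exact continuous_finset_sum _ fun m _ =>
        Real.continuous_negMulLog.comp (c2 i₀ m)
  have hA1 : IsClosed {z : (X → ℝ) × (X → X → ℝ) | ∀ i, 0 ≤ z.1 i} := by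
    rw [Set.setOf_forall]
    exact isClosed_iInter fun i => isClosed_le continuous_const (c1 i)
  have hA2 : IsClosed {z : (X → ℝ) × (X → X → ℝ) | ∑ i, z.1 i = 1} :=
    isClosed_eq (continuous_finset_sum _ fun i _ => c1 i) continuous_const
  have hA3 : IsClosed {z : (X → ℝ) × (X → X → ℝ) |
      ∀ i : X, μ ≤ ∑ j, |z.1 j - (if j = i then (1:ℝ) else 0)|} := by
    rw [Set.setOf_forall]
    refine isClosed_iInter fun i => isClosed_le continuous_const ?_
    exact continuous_finset_sum _ fun j _ =>
      continuous_abs.comp ((c1 j).sub continuous_const)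
  have hA4 : IsClosed {z : (X → ℝ) × (X → X → ℝ) | ∀ i m, 0 ≤ z.2 i m} := by
    rw [Set.setOf_forall]
    refine isClosed_iInter fun i => ?_
    rw [Set.setOf_forall]
    exact isClosed_iInter fun m => isClosed_le continuous_const (c2 i m)
  have hA5 : IsClosed {z : (X → ℝ) × (X → X → ℝ) | ∀ i, ∑ m, z.2 i m = 1} := by
    rw [Set.setOf_forall]
    exact isClosed_iInter fun i =>
      isClosed_eq (continuous_finset_sum _ fun m _ => c2 i m) continuous_const
  have hA6 : IsClosed {z : (X → ℝ) × (X → X → ℝ) |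
      ∀ i, ∑ m, Real.negMulLog (z.2 i m) = ∑ m, Real.negMulLog (z.2 i₀ m)} := by
    rw [Set.setOf_forall]
    refine isClosed_iInter fun i => isClosed_eq ?_ ?_ <;>
      exact continuous_finset_sum _ fun m _ =>
        Real.continuous_negMulLog.comp (c2 _ m)
  have hA7 : IsClosed {z : (X → ℝ) × (X → X → ℝ) |
      ∀ i j, i ≠ j → d ≤ ∑ m, |z.2 i m - z.2 j m|} := by
    rw [Set.setOf_forall]
    refine isClosed_iInter fun i => ?_
    rw [Set.setOf_forall]
    refine isClosed_iInter fun j => ?_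
    by_cases hij : i = j
    · have : {z : (X → ℝ) × (X → X → ℝ) | i ≠ j → d ≤ ∑ m, |z.2 i m - z.2 j m|}
          = Set.univ := by
        ext z; simp [hij]
      rw [this]; exact isClosed_univ
    · have : {z : (X → ℝ) × (X → X → ℝ) | i ≠ j → d ≤ ∑ m, |z.2 i m - z.2 j m|}
          = {z | d ≤ ∑ m, |z.2 i m - z.2 j m|} := by
        ext z; simp [hij]
      rw [this]
      exact isClosed_le continuous_const
        (continuous_finset_sum _ fun m _ =>
          continuous_abs.comp ((c2 i m).sub (c2 j m)))
  have hKclosed : IsClosed K := by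
    rw [hK]
    exact hA1.inter (hA2.inter (hA3.inter (hA4.inter (hA5.inter (hA6.inter hA7)))))
  have hKbdd : Bornology.IsBounded K := by
    apply Bornology.IsBounded.subset (Metric.isBounded_closedBall (x := 0) (r := 1))
    rintro z ⟨h1, h2, _, h4, h5, _, _⟩
    have hb1 : ∀ i, |z.1 i| ≤ 1 := by
      intro i
      rw [abs_of_nonneg (h1 i)]
      calc z.1 i ≤ ∑ j, z.1 j :=
        Finset.single_le_sum (fun j _ => h1 j) (Finset.mem_univ i)
      _ = 1 := h2
    have hb2 : ∀ i m, |z.2 i m| ≤ 1 := by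
      intro i m
      rw [abs_of_nonneg (h4 i m)]
      calc z.2 i m ≤ ∑ n, z.2 i n :=
        Finset.single_le_sum (fun n _ => h4 i n) (Finset.mem_univ m)
      _ = 1 := h5 i
    simp only [Metric.mem_closedBall, dist_zero_right]
    rw [Prod.norm_def]
    apply max_le
    · exact (pi_norm_le_iff_of_nonneg zero_le_one).2 fun i => by
        simpa [Real.norm_eq_abs] using hb1 i
    · exact (pi_norm_le_iff_of_nonneg zero_le_one).2 fun i =>
        (pi_norm_le_iff_of_nonneg zero_le_one).2 fun m => by
          simpa [Real.norm_eq_abs] using hb2 i m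
  have hKcomp : IsCompact K := Metric.isCompact_of_isClosed_isBounded hKclosed hKbdd
  rcases K.eq_empty_or_nonempty with hKe | hKne
  · refine ⟨1, one_pos, fun p r hp0 hp1 hfar hr0 hr1 hent hdist => ?_⟩
    exfalso
    have : (p, r) ∈ K := ⟨hp0, hp1, hfar, hr0, hr1, hent, hdist⟩
    rw [hKe] at this
    exact this
  · obtain ⟨z₀, hz₀K, hz₀min⟩ := hKcomp.exists_isMinOn hKne cF.continuousOn
    refine ⟨F z₀, ?_, fun p r hp0 hp1 hfar hr0 hr1 hent hdist => ?_⟩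
    · obtain ⟨h1, h2, h3, h4, h5, h6, h7⟩ := hz₀K
      have := hpos z₀.1 z₀.2 h1 h2 h3 h4 h5 h6 h7
      simp only [hF]
      linarith
    · have hmem : (p, r) ∈ K := ⟨hp0, hp1, hfar, hr0, hr1, hent, hdist⟩
      have := hz₀min hmem
      simp only [hF, Set.mem_setOf_eq] at this ⊢
      linarith

end

/-- Let `X` be a finite set and `η, μ, d > 0`. There exists `ε > 0`
(depending only on `X, η, μ, d`) such that for any distribution `p` on `X` with
`‖p − e_i‖₁ ≥ μ` for all `i`, and any family of distributions `r_i` with equal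
entropies `H(r_i) = h` and pairwise L1 distances at least `d`, the mixture satisfies
`H(∑ i, p i • r_i) ≥ h + ε`. (Entropy here in the natural base.) -/
theorem stmt10 {X : Type*} [Fintype X] [DecidableEq X] [Nonempty X]
    (η μ d : ℝ) (hη : 0 < η) (hμ : 0 < μ) (hd : 0 < d) :
    ∃ ε > 0, ∀ (p : X → ℝ) (r : X → X → ℝ) (h : ℝ),
      (∀ i, 0 ≤ p i) → ∑ i, p i = 1 →
      (∀ i : X, ∑ j, |p j - (if j = i then (1 : ℝ) else 0)| ≥ μ) →
      (∀ i, (∀ m, 0 ≤ r i m) ∧ ∑ m, r i m = 1) →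
      (∀ i, -∑ m, r i m * Real.log (r i m) = h) →
      (∀ i j, i ≠ j → ∑ m, |r i m - r j m| ≥ d) →
      -∑ m, (∑ i, p i * r i m) * Real.log (∑ i, p i * r i m) ≥ h + ε := by
  classical
  have hconv : ∀ q : X → ℝ,
      ∑ m, Real.negMulLog (q m) = -∑ m, q m * Real.log (q m) := by
    intro q
    simp [Real.negMulLog_eq_neg]
  obtain ⟨ε, hε, hmain⟩ := stmt10_aux (X := X) μ d hμ hd
    (fun p r hp0 hp1 hfar hr0 hr1 hent hdist =>
      stmt10_pos μ d hμ hd p r hp0 hp1 hfar hr0 hr1 hent hdist)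
  refine ⟨ε, hε, fun p r h hp0 hp1 hfar hsimp hent hdist => ?_⟩
  have hentN : ∀ i, ∑ m, Real.negMulLog (r i m) = h := by
    intro i
    rw [hconv]
    exact hent i
  have key := hmain p r hp0 hp1 hfar (fun i => (hsimp i).1) (fun i => (hsimp i).2)
    (fun i => by rw [hentN i, hentN (Classical.arbitrary X)]) hdist
  rw [hconv] at key
  rw [hentN (Classical.arbitrary X)] at key
  exact key
end

section
/- Let q be prime and δ > 0. There exists ε(δ) > 0 depending only on δ and q such that: for any finite set Y and jointly distributed random variables (X₁,Y₁), (X₂,Y₂) with values in (ℤ/qℤ) × Y, where (X₁,Y₁) is independent of (X₂,Y₂), if H(X₁|Y₁), H(X₂|Y₂) ∈ (δ, 1−δ) (conditional entropies in base q), then H(X₁ + X₂ | Y₁, Y₂) − max{H(X₁|Y₁), H(X₂|Y₂)} ≥ ε(δ). -/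
/-- Conditional entropy `H(X|Y)` in base `q` of a joint distribution `P` on `A × Y`. -/
noncomputable def condEntq (q : ℕ) {A Y : Type*} [Fintype A] [Fintype Y]
    (P : A × Y → ℝ) : ℝ :=
  -∑ x, ∑ y, P (x, y) * Real.logb q (P (x, y) / ∑ x', P (x', y))

/-!
Write `h` for entropy in base `q` and `p ∗ r` for convolution on `ℤ/qℤ`. Then
`H(X|Y) = ∑_y P(y) h(p_y)` and `H(X₁ + X₂ | Y₁, Y₂) = ∑_{y₁, y₂} P(y₁) P(y₂) h(p_{y₁} ∗ r_{y₂})`.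
Since `p ∗ r` is an `r`-average of translates of `p`, concavity of `-x log x` gives
`h(p ∗ r) ≥ h(p)`, strictly unless `r` is a point mass or `p` is invariant under a nonzero
translation; as `q` is prime, the latter forces `p` to be uniform. By compactness of the simplex
there is `M > 0` with `h(p ∗ r) ≥ h(p) + M` whenever `h(p) ≤ 1 - η` and `h(r) ≥ η`.
If the conditional entropies lie in `(2η, 1 - 2η)`, these two conditions hold on average with
weight at least `η` each (measured through positive parts), so averaging over `(y₁, y₂)` gains
at least `M η²` over either conditional entropy.
-/

open Finset Real

theorem ZMod.eq_of_periodic {q : ℕ} [NeZero q] {β : Type*} (hq : q.Prime) {f : ZMod q → β}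
    {d : ZMod q} (hf : Function.Periodic f d) (hd : d ≠ 0) (a b : ZMod q) : f a = f b := by
  have : Fact q.Prime := ⟨hq⟩
  have h := hf.nsmul ((b - a) / d).val a
  rwa [nsmul_eq_mul, ZMod.natCast_zmod_val, div_mul_cancel₀ _ hd, add_sub_cancel, eq_comm] at h

namespace EntropyOfSums

section Entropy

variable {ι : Type*} [Fintype ι]

noncomputable def entropy (p : ι → ℝ) : ℝ := ∑ i, negMulLog (p i)

noncomputable def normEntropy (p : ι → ℝ) : ℝ := entropy p / log (Fintype.card ι)

lemma continuous_entropy : Continuous (entropy : (ι → ℝ) → ℝ) :=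
  continuous_finsetSum _ fun i _ => continuous_negMulLog.comp (continuous_apply i)

lemma entropy_nonneg {p : ι → ℝ} (hp : p ∈ stdSimplex ℝ ι) : 0 ≤ entropy p :=
  sum_nonneg fun i _ => negMulLog_nonneg (hp.1 i) (single_le_sum (fun j _ => hp.1 j)
    (mem_univ i) |>.trans_eq hp.2)

lemma sum_mul_negMulLog_le {w x : ι → ℝ} (hw : w ∈ stdSimplex ℝ ι) (hx : ∀ i, 0 ≤ x i) :
    ∑ i, w i * negMulLog (x i) ≤ negMulLog (∑ i, w i * x i) :=
  concaveOn_negMulLog.le_map_sum (fun i _ => hw.1 i) hw.2 fun i _ => hx i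

lemma sum_mul_negMulLog_lt {w x : ι → ℝ} (hw : w ∈ stdSimplex ℝ ι) (hx : ∀ i, 0 ≤ x i)
    {i j : ι} (hi : 0 < w i) (hj : 0 < w j) (hij : x i ≠ x j) :
    ∑ i, w i * negMulLog (x i) < negMulLog (∑ i, w i * x i) := by
  classical
  have hsupp : ∀ {f : ι → ℝ}, ∀ k ∈ univ, w k * f k ≠ 0 → 0 < w k := fun k _ hk =>
    (hw.1 k).lt_of_ne' (left_ne_zero_of_mul hk)
  have hjensen := strictConcaveOn_negMulLog.lt_map_sum (t := univ.filter (0 < w ·)) (p := x)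
    (fun k hk => (mem_filter.1 hk).2)
    (by rw [sum_filter_of_ne fun k _ hk => (hw.1 k).lt_of_ne' hk, hw.2])
    (fun k _ => hx k) ⟨i, by simpa using hi, j, by simpa using hj, hij⟩
  simp only [smul_eq_mul] at hjensen
  rwa [sum_filter_of_ne hsupp, sum_filter_of_ne hsupp] at hjensen

lemma card_pos_of_mem_stdSimplex {p : ι → ℝ} (hp : p ∈ stdSimplex ℝ ι) :
    (0 : ℝ) < Fintype.card ι := by
  have : univ.Nonempty := nonempty_of_sum_ne_zero (hp.2.trans_ne one_ne_zero)
  exact_mod_cast card_pos.2 this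

lemma uniform_mem_stdSimplex [Nonempty ι] :
    (fun _ => (Fintype.card ι : ℝ)⁻¹) ∈ stdSimplex ℝ ι :=
  ⟨fun _ => by positivity, by simp⟩

lemma entropy_le_log_card {p : ι → ℝ} (hp : p ∈ stdSimplex ℝ ι) :
    entropy p ≤ log (Fintype.card ι) := by
  have hn := card_pos_of_mem_stdSimplex hp
  have : Nonempty ι := Fintype.card_pos_iff.1 (by exact_mod_cast hn)
  have h := sum_mul_negMulLog_le uniform_mem_stdSimplex hp.1
  rw [← mul_sum, ← mul_sum, hp.2, mul_one, negMulLog, log_inv] at h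
  rw [entropy]
  nlinarith [mul_inv_cancel₀ hn.ne']

lemma entropy_eq_log_card_of_forall_eq {p : ι → ℝ} (hp : p ∈ stdSimplex ℝ ι)
    (hconst : ∀ i j, p i = p j) : entropy p = log (Fintype.card ι) := by
  have hn := card_pos_of_mem_stdSimplex hp
  have hunif : ∀ i, p i = (Fintype.card ι : ℝ)⁻¹ := fun i => by
    refine eq_inv_of_mul_eq_one_right ?_
    rw [← hp.2, ← nsmul_eq_mul, ← card_univ, ← sum_const]
    exact sum_congr rfl fun j _ => hconst i j
  simp only [entropy, hunif, sum_const, card_univ, nsmul_eq_mul, negMulLog, log_inv]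
  field_simp

lemma normEntropy_nonneg {p : ι → ℝ} (hp : p ∈ stdSimplex ℝ ι) : 0 ≤ normEntropy p :=
  div_nonneg (entropy_nonneg hp) (log_natCast_nonneg _)

lemma normEntropy_le_one {p : ι → ℝ} (hp : p ∈ stdSimplex ℝ ι) : normEntropy p ≤ 1 :=
  div_le_one_of_le₀ (entropy_le_log_card hp) (log_natCast_nonneg _)

lemma exists_ne_pos_of_entropy_pos {p : ι → ℝ} (hp : p ∈ stdSimplex ℝ ι)
    (h : 0 < entropy p) : ∃ i j, i ≠ j ∧ 0 < p i ∧ 0 < p j := by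
  obtain ⟨i, -, hi⟩ := exists_lt_of_sum_lt (s := univ) (f := fun _ => (0 : ℝ))
    (g := fun i => negMulLog (p i)) (by simpa [entropy] using h)
  have hpi : 0 < p i := (hp.1 i).lt_of_ne' fun h0 => by simp [h0] at hi
  by_contra! hsingle
  have hpi1 : p i = 1 := by
    rw [← hp.2, sum_eq_single_of_mem i (mem_univ i) fun j _ hji =>
      le_antisymm (not_lt.1 fun hj => (hsingle j i hji hj).not_gt hpi) (hp.1 j)]
  simp [hpi1] at hi

end Entropy

section Convolution

variable {G : Type*} [AddCommGroup G] [Fintype G]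

noncomputable def conv (p r : G → ℝ) : G → ℝ := fun s => ∑ x, p x * r (s - x)

lemma conv_apply_eq_sum_mul_sub (p r : G → ℝ) (s : G) : conv p r s = ∑ y, r y * p (s - y) :=
  Fintype.sum_equiv (Equiv.subLeft s) _ _ fun y => by simp [mul_comm]

lemma conv_comm (p r : G → ℝ) : conv p r = conv r p := by
  funext s
  rw [conv_apply_eq_sum_mul_sub, conv]

lemma sum_conv (p r : G → ℝ) : ∑ s, conv p r s = (∑ x, p x) * ∑ y, r y := by
  simp only [conv, sum_mul_sum]
  rw [sum_comm]
  exact sum_congr rfl fun x _ => by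
    rw [← mul_sum, ← mul_sum]; congr 1; exact (Equiv.subRight x).sum_comp r

lemma continuous_conv : Continuous fun pr : (G → ℝ) × (G → ℝ) => conv pr.1 pr.2 :=
  continuous_pi fun s => continuous_finsetSum _ fun x _ =>
    ((continuous_apply x).comp continuous_fst).mul ((continuous_apply (s - x)).comp continuous_snd)

lemma sum_sum_mul_negMulLog_sub (p : G → ℝ) {r : G → ℝ} (hr : ∑ y, r y = 1) :
    ∑ s, ∑ y, r y * negMulLog (p (s - y)) = entropy p := by
  rw [sum_comm, ← one_mul (entropy p), ← hr, sum_mul]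
  exact sum_congr rfl fun y _ => by
    rw [← mul_sum, entropy]; congr 1; exact (Equiv.subRight y).sum_comp (negMulLog ∘ p)

lemma entropy_le_entropy_conv {p r : G → ℝ} (hp : p ∈ stdSimplex ℝ G)
    (hr : r ∈ stdSimplex ℝ G) : entropy p ≤ entropy (conv p r) := by
  rw [← sum_sum_mul_negMulLog_sub p hr.2, entropy]
  refine sum_le_sum fun s _ => ?_
  rw [conv_apply_eq_sum_mul_sub]
  exact sum_mul_negMulLog_le hr fun y => hp.1 _

lemma entropy_lt_entropy_conv {p r : G → ℝ} (hp : p ∈ stdSimplex ℝ G)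
    (hr : r ∈ stdSimplex ℝ G) {y₁ y₂ s : G} (hr₁ : 0 < r y₁) (hr₂ : 0 < r y₂)
    (hs : p (s - y₁) ≠ p (s - y₂)) : entropy p < entropy (conv p r) := by
  rw [← sum_sum_mul_negMulLog_sub p hr.2, entropy]
  refine sum_lt_sum (fun t _ => ?_) ⟨s, mem_univ s, ?_⟩ <;> rw [conv_apply_eq_sum_mul_sub]
  · exact sum_mul_negMulLog_le hr fun y => hp.1 _
  · exact sum_mul_negMulLog_lt hr (fun y => hp.1 _) hr₁ hr₂ hs

lemma normEntropy_le_normEntropy_conv {p r : G → ℝ} (hp : p ∈ stdSimplex ℝ G)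
    (hr : r ∈ stdSimplex ℝ G) : normEntropy p ≤ normEntropy (conv p r) :=
  div_le_div_of_nonneg_right (entropy_le_entropy_conv hp hr) (log_natCast_nonneg _)

lemma normEntropy_add_mul_posPart_le {η M : ℝ} (hη : 0 ≤ η) (hM : 0 ≤ M) {p r : G → ℝ}
    (hp : p ∈ stdSimplex ℝ G) (hr : r ∈ stdSimplex ℝ G)
    (hgap : normEntropy p ≤ 1 - η → η ≤ normEntropy r →
      normEntropy p + M ≤ normEntropy (conv p r)) :
    normEntropy p + M * ((1 - η - normEntropy p)⁺ * (normEntropy r - η)⁺) ≤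
      normEntropy (conv p r) := by
  have hmono := normEntropy_le_normEntropy_conv hp hr
  have hp₀ := normEntropy_nonneg hp
  have hr₁ := normEntropy_le_one hr
  rcases (mul_nonneg (posPart_nonneg (1 - η - normEntropy p))
    (posPart_nonneg (normEntropy r - η))).eq_or_lt with h0 | hpos
  · rw [← h0, mul_zero, add_zero]
    exact hmono
  obtain ⟨ha, hb⟩ := (pos_and_pos_or_neg_and_neg_of_mul_pos hpos).resolve_right
    fun h => (posPart_nonneg _).not_gt h.1
  rw [posPart_pos_iff] at ha hb
  have hprod : (1 - η - normEntropy p)⁺ * (normEntropy r - η)⁺ ≤ 1 := by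
    rw [posPart_eq_self.2 ha.le, posPart_eq_self.2 hb.le]
    exact mul_le_one₀ (by linarith) hb.le (by linarith)
  nlinarith [hgap (by linarith) (by linarith)]

end Convolution

section Averages

variable {Y₁ Y₂ : Type*} [Fintype Y₁] [Fintype Y₂]

lemma sub_le_sum_mul_posPart {w a : Y₁ → ℝ} (hw : w ∈ stdSimplex ℝ Y₁) (c : ℝ) :
    ∑ y, w y * a y - c ≤ ∑ y, w y * (a y - c)⁺ := by
  calc ∑ y, w y * a y - c = ∑ y, w y * (a y - c) := by
        simp only [mul_sub, sum_sub_distrib, ← sum_mul, hw.2, one_mul]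
    _ ≤ _ := sum_le_sum fun y _ => mul_le_mul_of_nonneg_left (le_posPart _) (hw.1 y)

lemma sub_sum_le_sum_mul_posPart {w a : Y₁ → ℝ} (hw : w ∈ stdSimplex ℝ Y₁) (c : ℝ) :
    c - ∑ y, w y * a y ≤ ∑ y, w y * (c - a y)⁺ := by
  calc c - ∑ y, w y * a y = ∑ y, w y * (c - a y) := by
        simp only [mul_sub, sum_sub_distrib, ← sum_mul, hw.2, one_mul]
    _ ≤ _ := sum_le_sum fun y _ => mul_le_mul_of_nonneg_left (le_posPart _) (hw.1 y)

lemma add_mul_sum_mul_sum_le {w₁ : Y₁ → ℝ} {w₂ : Y₂ → ℝ} (hw₁ : w₁ ∈ stdSimplex ℝ Y₁)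
    (hw₂ : w₂ ∈ stdSimplex ℝ Y₂) {a f : Y₁ → ℝ} {g : Y₂ → ℝ} {F : Y₁ → Y₂ → ℝ} (c : ℝ)
    (h : ∀ y₁ y₂, a y₁ + c * (f y₁ * g y₂) ≤ F y₁ y₂) :
    ∑ y₁, w₁ y₁ * a y₁ + c * ((∑ y₁, w₁ y₁ * f y₁) * ∑ y₂, w₂ y₂ * g y₂) ≤
      ∑ y₁, ∑ y₂, w₁ y₁ * w₂ y₂ * F y₁ y₂ := by
  calc _ = (∑ y₁, w₁ y₁ * a y₁) * (∑ y₂, w₂ y₂) +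
        c * ((∑ y₁, w₁ y₁ * f y₁) * ∑ y₂, w₂ y₂ * g y₂) := by rw [hw₂.2, mul_one]
    _ = ∑ y₁, ∑ y₂, w₁ y₁ * w₂ y₂ * (a y₁ + c * (f y₁ * g y₂)) := by
        rw [sum_mul_sum, sum_mul_sum, mul_sum, ← sum_add_distrib]
        refine sum_congr rfl fun y₁ _ => ?_
        rw [mul_sum, ← sum_add_distrib]
        exact sum_congr rfl fun y₂ _ => by ring
    _ ≤ _ := sum_le_sum fun y₁ _ => sum_le_sum fun y₂ _ =>
        mul_le_mul_of_nonneg_left (h y₁ y₂) (mul_nonneg (hw₁.1 y₁) (hw₂.1 y₂))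

lemma add_mul_sq_le_sum_normEntropy_conv {G : Type*} [AddCommGroup G] [Fintype G] {η M : ℝ}
    (hη : 0 ≤ η) (hM : 0 ≤ M)
    (hgap : ∀ p ∈ stdSimplex ℝ G, ∀ r ∈ stdSimplex ℝ G,
      normEntropy p ≤ 1 - η → η ≤ normEntropy r → normEntropy p + M ≤ normEntropy (conv p r))
    {w₁ : Y₁ → ℝ} {w₂ : Y₂ → ℝ} (hw₁ : w₁ ∈ stdSimplex ℝ Y₁) (hw₂ : w₂ ∈ stdSimplex ℝ Y₂)
    {p₁ : Y₁ → G → ℝ} {p₂ : Y₂ → G → ℝ} (hp₁ : ∀ y, p₁ y ∈ stdSimplex ℝ G)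
    (hp₂ : ∀ y, p₂ y ∈ stdSimplex ℝ G)
    (h₁ : ∑ y, w₁ y * normEntropy (p₁ y) ≤ 1 - 2 * η)
    (h₂ : 2 * η ≤ ∑ y, w₂ y * normEntropy (p₂ y)) :
    ∑ y, w₁ y * normEntropy (p₁ y) + M * (η * η) ≤
      ∑ y₁, ∑ y₂, w₁ y₁ * w₂ y₂ * normEntropy (conv (p₁ y₁) (p₂ y₂)) := by
  have hA := sub_sum_le_sum_mul_posPart hw₁ (a := fun y => normEntropy (p₁ y)) (1 - η)
  have hB := sub_le_sum_mul_posPart hw₂ (a := fun y => normEntropy (p₂ y)) η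
  refine le_trans ?_ <| add_mul_sum_mul_sum_le hw₁ hw₂ M fun y₁ y₂ =>
    normEntropy_add_mul_posPart_le hη hM (hp₁ y₁) (hp₂ y₂) (hgap _ (hp₁ y₁) _ (hp₂ y₂))
  gcongr <;> linarith

end Averages

section ZMod

variable {q : ℕ} [NeZero q]

lemma exists_apply_sub_ne (hq : q.Prime) {p : ZMod q → ℝ} (hp : ∃ a b, p a ≠ p b)
    {y₁ y₂ : ZMod q} (hy : y₁ ≠ y₂) : ∃ s, p (s - y₁) ≠ p (s - y₂) := by
  by_contra! h
  obtain ⟨a, b, hab⟩ := hp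
  refine hab (ZMod.eq_of_periodic hq (d := y₁ - y₂) (fun x => ?_) (sub_ne_zero.2 hy) a b)
  simpa [sub_sub_eq_add_sub, add_sub_assoc] using (h (x + y₁)).symm

lemma normEntropy_zmod (p : ZMod q → ℝ) : normEntropy p = entropy p / log q := by
  rw [normEntropy, ZMod.card]

lemma normEntropy_lt_normEntropy_conv (hq : q.Prime) {p r : ZMod q → ℝ}
    (hp : p ∈ stdSimplex ℝ (ZMod q)) (hr : r ∈ stdSimplex ℝ (ZMod q))
    (hp₁ : normEntropy p < 1) (hr₀ : 0 < normEntropy r) :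
    normEntropy p < normEntropy (conv p r) := by
  have hlog : 0 < log q := log_pos (by exact_mod_cast hq.one_lt)
  rw [normEntropy_zmod] at hp₁ hr₀ ⊢
  rw [normEntropy_zmod, div_lt_div_iff_of_pos_right hlog]
  have hnonconst : ∃ a b, p a ≠ p b := by
    by_contra! hconst
    rw [entropy_eq_log_card_of_forall_eq hp hconst, ZMod.card, div_self hlog.ne'] at hp₁
    exact hp₁.false
  obtain ⟨y₁, y₂, hy, hr₁, hr₂⟩ := exists_ne_pos_of_entropy_pos hr (by
    simpa [div_pos_iff_of_pos_right hlog] using hr₀)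
  obtain ⟨s, hs⟩ := exists_apply_sub_ne hq hnonconst hy
  exact entropy_lt_entropy_conv hp hr hr₁ hr₂ hs

lemma exists_normEntropy_conv_gap (hq : q.Prime) {η : ℝ} (hη : 0 < η) :
    ∃ M > 0, ∀ p ∈ stdSimplex ℝ (ZMod q), ∀ r ∈ stdSimplex ℝ (ZMod q),
      normEntropy p ≤ 1 - η → η ≤ normEntropy r →
        normEntropy p + M ≤ normEntropy (conv p r) := by
  have hcont : Continuous (normEntropy : (ZMod q → ℝ) → ℝ) :=
    continuous_entropy.div_const _
  let K := (stdSimplex ℝ (ZMod q) ∩ {p | normEntropy p ≤ 1 - η}) ×ˢ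
    (stdSimplex ℝ (ZMod q) ∩ {r | η ≤ normEntropy r})
  have hK : IsCompact K :=
    ((isCompact_stdSimplex _ _).inter_right (isClosed_le hcont continuous_const)).prod
      ((isCompact_stdSimplex _ _).inter_right (isClosed_le continuous_const hcont))
  have hpos : ∀ pr ∈ K, 0 < normEntropy (conv pr.1 pr.2) - normEntropy pr.1 := by
    rintro ⟨p, r⟩ ⟨⟨hp, hp₁⟩, ⟨hr, hr₀⟩⟩
    exact sub_pos.2 <| normEntropy_lt_normEntropy_conv hq hp hr
      (hp₁.trans_lt (sub_lt_self 1 hη)) (hη.trans_le hr₀)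
  obtain ⟨M, hM, hgap⟩ := hK.exists_forall_le'
    ((hcont.comp continuous_conv).sub (hcont.comp continuous_fst)).continuousOn hpos
  refine ⟨M, hM, fun p hp r hr hp₁ hr₀ => ?_⟩
  have := hgap (p, r) ⟨⟨hp, hp₁⟩, ⟨hr, hr₀⟩⟩
  simp only [Pi.sub_apply, Function.comp_apply] at this
  linarith

end ZMod

section ConditionalEntropy

variable {A Y : Type*} [Fintype A] [Fintype Y]

lemma exists_eq_mul_of_mem_stdSimplex [Nonempty A] {P : A × Y → ℝ}
    (hP : P ∈ stdSimplex ℝ (A × Y)) :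
    ∃ w ∈ stdSimplex ℝ Y, ∃ p : Y → A → ℝ, (∀ y, p y ∈ stdSimplex ℝ A) ∧
      ∀ x y, P (x, y) = w y * p y x := by
  classical
  let w y := ∑ x, P (x, y)
  have hw : w ∈ stdSimplex ℝ Y :=
    ⟨fun y => sum_nonneg fun x _ => hP.1 _, by rw [← hP.2, Fintype.sum_prod_type_right]⟩
  -- the conditional law at a null `y` is arbitrary; a point mass keeps it a distribution
  let p y := if w y = 0 then Pi.single (Classical.arbitrary A) 1 else fun x => P (x, y) / w y
  refine ⟨w, hw, p, fun y => ?_, fun x y => ?_⟩ <;> by_cases hy : w y = 0 <;>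
    simp only [p, hy, if_true, if_false]
  · exact single_mem_stdSimplex ℝ _
  · exact ⟨fun x => div_nonneg (hP.1 _) (hw.1 y), by rw [← sum_div, div_self hy]⟩
  · rw [zero_mul]
    exact (sum_eq_zero_iff_of_nonneg fun x _ => hP.1 (x, y)).1 hy x (mem_univ x)
  · rw [mul_div_cancel₀ _ hy]

lemma condEntq_eq_sum (b : ℕ) {P : A × Y → ℝ} {w : Y → ℝ} {p : Y → A → ℝ}
    (hp : ∀ y, ∑ x, p y x = 1) (hP : ∀ x y, P (x, y) = w y * p y x) :
    condEntq b P = ∑ y, w y * (entropy (p y) / log b) := by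
  rw [condEntq, sum_comm, ← sum_neg_distrib]
  refine sum_congr rfl fun y _ => ?_
  have hw : ∑ x, P (x, y) = w y := by simp only [hP, ← mul_sum, hp, mul_one]
  rw [hw]
  by_cases hy : w y = 0
  · simp [hP, hy]
  simp only [hP, mul_div_cancel_left₀ _ hy, entropy, negMulLog, logb, mul_sum, sum_div,
    ← sum_neg_distrib]
  exact sum_congr rfl fun x _ => by ring

lemma condEntq_sum_eq_sum_conv (b : ℕ) {G : Type*} [AddCommGroup G] [Fintype G]
    {Y₁ Y₂ : Type*} [Fintype Y₁] [Fintype Y₂] {P₁ : G × Y₁ → ℝ} {P₂ : G × Y₂ → ℝ}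
    {w₁ : Y₁ → ℝ} {w₂ : Y₂ → ℝ} {p₁ : Y₁ → G → ℝ} {p₂ : Y₂ → G → ℝ}
    (hp₁ : ∀ y, ∑ x, p₁ y x = 1) (hp₂ : ∀ y, ∑ x, p₂ y x = 1)
    (hP₁ : ∀ x y, P₁ (x, y) = w₁ y * p₁ y x) (hP₂ : ∀ x y, P₂ (x, y) = w₂ y * p₂ y x) :
    condEntq b (fun sy : G × (Y₁ × Y₂) => ∑ x, P₁ (x, sy.2.1) * P₂ (sy.1 - x, sy.2.2)) =
      ∑ y₁, ∑ y₂, w₁ y₁ * w₂ y₂ * (entropy (conv (p₁ y₁) (p₂ y₂)) / log b) := by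
  rw [condEntq_eq_sum b (w := fun y => w₁ y.1 * w₂ y.2) (p := fun y => conv (p₁ y.1) (p₂ y.2))
    (fun y => by rw [sum_conv, hp₁, hp₂, one_mul]), Fintype.sum_prod_type]
  intro s y
  simp only [hP₁, hP₂, conv, mul_sum]
  exact sum_congr rfl fun x _ => by ring

end ConditionalEntropy

end EntropyOfSums

open EntropyOfSums in
/-- For prime `q` and `δ > 0` there is `ε(δ) > 0`, depending only on
`δ` and `q`, such that for any finite `Y` and independent pairs `(X₁,Y₁)`, `(X₂,Y₂)`
with joint laws `P1, P2` on `ℤ/qℤ × Y`, if `H(X₁|Y₁), H(X₂|Y₂) ∈ (δ, 1−δ)` then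
`H(X₁+X₂ | Y₁,Y₂) − max{H(X₁|Y₁), H(X₂|Y₂)} ≥ ε(δ)`. -/
theorem stmt11 (q : ℕ) [NeZero q] (hq : q.Prime) (δ : ℝ) (hδ : 0 < δ) :
    ∃ ε > 0, ∀ (Y : Type) (_ : Fintype Y) (P1 P2 : ZMod q × Y → ℝ),
      (∀ z, 0 ≤ P1 z) → ∑ z, P1 z = 1 →
      (∀ z, 0 ≤ P2 z) → ∑ z, P2 z = 1 →
      condEntq q P1 ∈ Set.Ioo δ (1 - δ) →
      condEntq q P2 ∈ Set.Ioo δ (1 - δ) →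
      condEntq q
          (fun sy : ZMod q × (Y × Y) => ∑ x1, P1 (x1, sy.2.1) * P2 (sy.1 - x1, sy.2.2))
        - max (condEntq q P1) (condEntq q P2) ≥ ε := by
  obtain ⟨M, hM, hgap⟩ := exists_normEntropy_conv_gap hq (half_pos hδ)
  refine ⟨M * (δ / 2 * (δ / 2)), by positivity, ?_⟩
  intro Y _ P₁ P₂ hP₁n hP₁s hP₂n hP₂s hH₁ hH₂
  obtain ⟨w₁, hw₁, p₁, hp₁, hP₁⟩ := exists_eq_mul_of_mem_stdSimplex ⟨hP₁n, hP₁s⟩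
  obtain ⟨w₂, hw₂, p₂, hp₂, hP₂⟩ := exists_eq_mul_of_mem_stdSimplex ⟨hP₂n, hP₂s⟩
  simp only [condEntq_sum_eq_sum_conv q (fun y => (hp₁ y).2) (fun y => (hp₂ y).2) hP₁ hP₂,
    condEntq_eq_sum q (fun y => (hp₁ y).2) hP₁, condEntq_eq_sum q (fun y => (hp₂ y).2) hP₂,
    ← normEntropy_zmod, Set.mem_Ioo] at hH₁ hH₂ ⊢
  have h₁₂ := add_mul_sq_le_sum_normEntropy_conv (half_pos hδ).le hM.le hgap hw₁ hw₂ hp₁ hp₂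
    (by linarith) (by linarith)
  have h₂₁ := add_mul_sq_le_sum_normEntropy_conv (half_pos hδ).le hM.le hgap hw₂ hw₁ hp₂ hp₁
    (by linarith) (by linarith)
  rw [sum_comm] at h₂₁
  simp only [conv_comm (p₂ _), mul_comm (w₂ _) (w₁ _)] at h₂₁
  rw [ge_iff_le, le_sub_comm]
  exact max_le (by linarith) (by linarith)
end

section
/- Let W be a discrete memoryless channel with input alphabet ℤ/qℤ and finite output alphabet Y, and define W⁻(y₁,y₂|u₁) = (1/q)∑_{u₂} W(y₁|u₁−u₂)W(y₂|u₂) and W⁺(y₁,y₂,u₁|u₂) = (1/q)W(y₁|u₁−u₂)W(y₂|u₂). Then I(W⁻) + I(W⁺) = 2·I(W), where I(·) is the mutual information with uniformly distributed input, measured in base q. -/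
/-- Uniform-input (symmetric) mutual information of a channel `W : ℤ/qℤ → Y`,
measured in base `q`. -/
noncomputable def mutInfo (q : ℕ) [NeZero q] {Y : Type*} [Fintype Y] (W : ZMod q → Y → ℝ) : ℝ :=
  ∑ x, ∑ y, (1 / q : ℝ) * W x y *
    Real.logb q (W x y / ((1 / q : ℝ) * ∑ x', W x' y))

/-- `W` is a channel: each row is a probability distribution on the output. -/
def IsChannel (q : ℕ) [NeZero q] {Y : Type*} [Fintype Y] (W : ZMod q → Y → ℝ) : Prop :=
  (∀ x y, 0 ≤ W x y) ∧ ∀ x, ∑ y, W x y = 1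

/-- The "minus" polar transform `W⁻(y₁,y₂|u₁) = (1/q)∑_{u₂} W(y₁|u₁−u₂)W(y₂|u₂)`. -/
noncomputable def polarMinus (q : ℕ) [NeZero q] {Y : Type*} [Fintype Y]
    (W : ZMod q → Y → ℝ) : ZMod q → Y × Y → ℝ :=
  fun u1 yy => (1 / q : ℝ) * ∑ u2, W (u1 - u2) yy.1 * W u2 yy.2

/-- The "plus" polar transform `W⁺(y₁,y₂,u₁|u₂) = (1/q)W(y₁|u₁−u₂)W(y₂|u₂)`. -/
noncomputable def polarPlus (q : ℕ) [NeZero q] {Y : Type*} [Fintype Y]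
    (W : ZMod q → Y → ℝ) : ZMod q → Y × Y × ZMod q → ℝ :=
  fun u2 z => (1 / q : ℝ) * W (z.2.2 - u2) z.1 * W u2 z.2.1

private lemma logb_split_aux (b a' b' Q1 Q2 m : ℝ)
    (ha : 0 < a') (hb : 0 < b') (hQ1 : 0 < Q1) (hQ2 : 0 < Q2) (hm : 0 < m) :
    Real.logb b (m / (Q1 * Q2)) + Real.logb b (a' * b' / m)
      = Real.logb b (a' / Q1) + Real.logb b (b' / Q2) := by
  rw [← Real.logb_mul (by positivity) (by positivity),
      ← Real.logb_mul (by positivity) (by positivity)]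
  congr 1
  field_simp

private lemma sum_rot {α β γ : Type*} [Fintype α] [Fintype β] [Fintype γ]
    (f : α → β → γ → ℝ) :
    ∑ a, ∑ b, ∑ c, f a b c = ∑ b, ∑ c, ∑ a, f a b c := by
  rw [Finset.sum_comm]
  exact Finset.sum_congr rfl fun b _ => Finset.sum_comm

private lemma sum_add4 {A B C D : Type*} [Fintype A] [Fintype B] [Fintype C] [Fintype D]
    (f g : A → B → C → D → ℝ) :
    (∑ a, ∑ b, ∑ c, ∑ d, f a b c d) + (∑ a, ∑ b, ∑ c, ∑ d, g a b c d)
      = ∑ a, ∑ b, ∑ c, ∑ d, (f a b c d + g a b c d) := by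
  rw [← Finset.sum_add_distrib]
  refine Finset.sum_congr rfl fun a _ => ?_
  rw [← Finset.sum_add_distrib]
  refine Finset.sum_congr rfl fun b _ => ?_
  rw [← Finset.sum_add_distrib]
  refine Finset.sum_congr rfl fun c _ => ?_
  rw [← Finset.sum_add_distrib]

/-- `I(W⁻) + I(W⁺) = 2·I(W)` (chain rule of mutual information). -/
theorem stmt13 (q : ℕ) [NeZero q] (hq : 2 ≤ q) {Y : Type*} [Fintype Y]
    (W : ZMod q → Y → ℝ) (hW : IsChannel q W) :
    mutInfo q (polarMinus q W) + mutInfo q (polarPlus q W) = 2 * mutInfo q W := by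
  classical
  obtain ⟨hpos, hsum⟩ := hW
  have hq0 : (0:ℝ) < q := by exact_mod_cast NeZero.pos q
  set c : ℝ := 1 / q with hc_def
  have hc : 0 < c := by positivity
  have hqc : (q:ℝ) * (c * c) = c := by rw [hc_def]; field_simp
  set Q : Y → ℝ := fun y => c * ∑ x, W x y with hQ_def
  have hQpos : ∀ x y, 0 < W x y → 0 < Q y := by
    intro x y h
    have h1 : W x y ≤ ∑ x', W x' y :=
      Finset.single_le_sum (fun i _ => hpos i y) (Finset.mem_univ x)
    exact mul_pos hc (lt_of_lt_of_le h h1)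
  set M : ZMod q → Y → Y → ℝ := fun u1 y1 y2 => c * ∑ u2, W (u1 - u2) y1 * W u2 y2
    with hM_def
  have hMge : ∀ u1 u2 y1 y2, c * (W (u1 - u2) y1 * W u2 y2) ≤ M u1 y1 y2 := by
    intro u1 u2 y1 y2
    have h1 : W (u1 - u2) y1 * W u2 y2 ≤ ∑ v, W (u1 - v) y1 * W v y2 :=
      Finset.single_le_sum (f := fun v => W (u1 - v) y1 * W v y2)
        (fun v _ => mul_nonneg (hpos _ _) (hpos _ _)) (Finset.mem_univ u2)
    exact mul_le_mul_of_nonneg_left h1 hc.le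
  have hre : ∀ (u2 : ZMod q) (f : ZMod q → ℝ), ∑ u1, f (u1 - u2) = ∑ x, f x :=
    fun u2 f => Fintype.sum_equiv (Equiv.subRight u2) _ _ (fun _ => rfl)
  have hmut : mutInfo q W = ∑ x, ∑ y, c * W x y * Real.logb q (W x y / Q y) := by
    simp only [mutInfo, hQ_def, hc_def]
  have hmpm : ∀ u1 y1 y2, polarMinus q W u1 (y1, y2) = M u1 y1 y2 := by
    intro u1 y1 y2; simp only [polarMinus, hM_def, hc_def]
  have hden1 : ∀ y1 y2 : Y, ((1:ℝ)/q) * ∑ u1', polarMinus q W u1' (y1, y2) = Q y1 * Q y2 := by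
    intro y1 y2
    simp only [polarMinus]
    calc ((1:ℝ)/q) * ∑ u1', (1/(q:ℝ)) * ∑ u2, W (u1' - u2) y1 * W u2 y2
        = c * c * ∑ u2, ∑ u1', W (u1' - u2) y1 * W u2 y2 := by
          rw [← Finset.mul_sum, Finset.sum_comm, hc_def]; ring
      _ = c * c * ∑ u2, (∑ x, W x y1) * W u2 y2 := by
          congr 1
          refine Finset.sum_congr rfl fun u2 _ => ?_
          rw [← Finset.sum_mul]
          congr 1
          exact hre u2 (fun x => W x y1)
      _ = Q y1 * Q y2 := by
          rw [← Finset.mul_sum]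
          simp only [hQ_def]
          ring
  have hden2 : ∀ (u1 : ZMod q) (y1 y2 : Y),
      ((1:ℝ)/q) * ∑ u2', polarPlus q W u2' (y1, y2, u1) = c * M u1 y1 y2 := by
    intro u1 y1 y2
    simp only [polarPlus, hM_def, hc_def, Finset.mul_sum]
    exact Finset.sum_congr rfl fun _ _ => by ring
  have hpp : ∀ (u1 u2 : ZMod q) (y1 y2 : Y),
      polarPlus q W u2 (y1, y2, u1) = c * (W (u1 - u2) y1 * W u2 y2) := by
    intro u1 u2 y1 y2
    simp only [polarPlus, hc_def]; ring
  -- STEP 1 : minus channel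
  have L1 : mutInfo q (polarMinus q W)
      = ∑ u1, ∑ u2, ∑ y1, ∑ y2, (c * c * (W (u1 - u2) y1 * W u2 y2)) *
          Real.logb q (M u1 y1 y2 / (Q y1 * Q y2)) := by
    unfold mutInfo
    simp only [Fintype.sum_prod_type]
    refine Finset.sum_congr rfl fun u1 _ => ?_
    refine Eq.trans ?_ ((sum_rot (fun u2 y1 y2 => (c * c * (W (u1 - u2) y1 * W u2 y2)) *
        Real.logb q (M u1 y1 y2 / (Q y1 * Q y2)))).symm)
    refine Finset.sum_congr rfl fun y1 _ => Finset.sum_congr rfl fun y2 _ => ?_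
    rw [hden1 y1 y2, hmpm u1 y1 y2, ← Finset.sum_mul]
    congr 1
    simp only [hM_def, hc_def, Finset.mul_sum]
    exact Finset.sum_congr rfl fun _ _ => by ring
  -- STEP 2 : plus channel
  have L2 : mutInfo q (polarPlus q W)
      = ∑ u1, ∑ u2, ∑ y1, ∑ y2, (c * c * (W (u1 - u2) y1 * W u2 y2)) *
          Real.logb q ((W (u1 - u2) y1 * W u2 y2) / M u1 y1 y2) := by
    unfold mutInfo
    simp only [Fintype.sum_prod_type]
    refine Eq.trans ?_ (Finset.sum_comm)
    refine Finset.sum_congr rfl fun u2 _ => ?_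
    refine Eq.trans ?_ ((sum_rot (fun u1 y1 y2 => (c * c * (W (u1 - u2) y1 * W u2 y2)) *
        Real.logb q ((W (u1 - u2) y1 * W u2 y2) / M u1 y1 y2))).symm)
    refine Finset.sum_congr rfl fun y1 _ => Finset.sum_congr rfl fun y2 _ =>
      Finset.sum_congr rfl fun u1 _ => ?_
    rw [hden2 u1 y1 y2, hpp u1 u2 y1 y2,
        mul_div_mul_left (W (u1 - u2) y1 * W u2 y2) (M u1 y1 y2) (ne_of_gt hc)]
    rw [hc_def]
    ring
  -- STEP 3a : first copy of mutInfo W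
  have S1 : (∑ u1, ∑ u2, ∑ y1, ∑ y2, (c * c * (W (u1 - u2) y1 * W u2 y2)) *
        Real.logb q (W (u1 - u2) y1 / Q y1)) = mutInfo q W := by
    calc ∑ u1, ∑ u2, ∑ y1, ∑ y2, (c * c * (W (u1 - u2) y1 * W u2 y2)) *
            Real.logb q (W (u1 - u2) y1 / Q y1)
        = ∑ u2, ∑ u1, ∑ y1, ∑ y2, (c * c * (W (u1 - u2) y1 * W u2 y2)) *
            Real.logb q (W (u1 - u2) y1 / Q y1) := Finset.sum_comm
      _ = ∑ u2 : ZMod q, ∑ x, ∑ y1, ∑ y2, (c * c * (W x y1 * W u2 y2)) *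
            Real.logb q (W x y1 / Q y1) := by
          refine Finset.sum_congr rfl fun u2 _ => ?_
          exact hre u2 (fun x => ∑ y1, ∑ y2, (c * c * (W x y1 * W u2 y2)) *
            Real.logb q (W x y1 / Q y1))
      _ = ∑ u2 : ZMod q, ∑ x, ∑ y1,
            c * c * (W x y1 * Real.logb q (W x y1 / Q y1)) := by
          refine Finset.sum_congr rfl fun u2 _ => Finset.sum_congr rfl fun x _ =>
            Finset.sum_congr rfl fun y1 _ => ?_
          refine Eq.trans (Finset.sum_congr rfl fun y2 _ =>
            (by ring : (c * c * (W x y1 * W u2 y2)) * Real.logb q (W x y1 / Q y1)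
              = (c * c * (W x y1 * Real.logb q (W x y1 / Q y1))) * W u2 y2)) ?_
          rw [← Finset.mul_sum, hsum u2, mul_one]
      _ = (q:ℝ) * ∑ x, ∑ y1, c * c * (W x y1 * Real.logb q (W x y1 / Q y1)) := by
          rw [Finset.sum_const, Finset.card_univ, ZMod.card, nsmul_eq_mul]
      _ = mutInfo q W := by
          rw [hmut, Finset.mul_sum]
          refine Finset.sum_congr rfl fun x _ => ?_
          rw [Finset.mul_sum]
          refine Finset.sum_congr rfl fun y _ => ?_
          calc (q:ℝ) * (c * c * (W x y * Real.logb q (W x y / Q y)))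
              = ((q:ℝ) * (c * c)) * (W x y * Real.logb q (W x y / Q y)) := by ring
            _ = c * (W x y * Real.logb q (W x y / Q y)) := by rw [hqc]
            _ = c * W x y * Real.logb q (W x y / Q y) := by ring
  -- STEP 3b : second copy of mutInfo W
  have S2 : (∑ u1, ∑ u2, ∑ y1, ∑ y2, (c * c * (W (u1 - u2) y1 * W u2 y2)) *
        Real.logb q (W u2 y2 / Q y2)) = mutInfo q W := by
    calc ∑ u1, ∑ u2, ∑ y1, ∑ y2, (c * c * (W (u1 - u2) y1 * W u2 y2)) *
            Real.logb q (W u2 y2 / Q y2)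
        = ∑ u2, ∑ u1, ∑ y1, ∑ y2, (c * c * (W (u1 - u2) y1 * W u2 y2)) *
            Real.logb q (W u2 y2 / Q y2) := Finset.sum_comm
      _ = ∑ u2, ∑ y2, ∑ u1, ∑ y1, (c * c * (W (u1 - u2) y1 * W u2 y2)) *
            Real.logb q (W u2 y2 / Q y2) := by
          refine Finset.sum_congr rfl fun u2 _ => ?_
          exact (sum_rot (fun y2 u1 y1 => (c * c * (W (u1 - u2) y1 * W u2 y2)) *
            Real.logb q (W u2 y2 / Q y2))).symm
      _ = ∑ u2, ∑ y2, ∑ u1 : ZMod q,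
            (c * c * (W u2 y2 * Real.logb q (W u2 y2 / Q y2))) := by
          refine Finset.sum_congr rfl fun u2 _ => Finset.sum_congr rfl fun y2 _ =>
            Finset.sum_congr rfl fun u1 _ => ?_
          refine Eq.trans (Finset.sum_congr rfl fun y1 _ =>
            (by ring : (c * c * (W (u1 - u2) y1 * W u2 y2)) * Real.logb q (W u2 y2 / Q y2)
              = (c * c * (W u2 y2 * Real.logb q (W u2 y2 / Q y2))) * W (u1 - u2) y1)) ?_
          rw [← Finset.mul_sum, hsum (u1 - u2), mul_one]
      _ = ∑ u2, ∑ y2, (q:ℝ) * (c * c * (W u2 y2 * Real.logb q (W u2 y2 / Q y2))) := by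
          refine Finset.sum_congr rfl fun u2 _ => Finset.sum_congr rfl fun y2 _ => ?_
          rw [Finset.sum_const, Finset.card_univ, ZMod.card, nsmul_eq_mul]
      _ = mutInfo q W := by
          rw [hmut]
          refine Finset.sum_congr rfl fun x _ => Finset.sum_congr rfl fun y _ => ?_
          calc (q:ℝ) * (c * c * (W x y * Real.logb q (W x y / Q y)))
              = ((q:ℝ) * (c * c)) * (W x y * Real.logb q (W x y / Q y)) := by ring
            _ = c * (W x y * Real.logb q (W x y / Q y)) := by rw [hqc]
            _ = c * W x y * Real.logb q (W x y / Q y) := by ring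
  -- assemble
  have hL3 : 2 * mutInfo q W
      = ∑ u1, ∑ u2, ∑ y1, ∑ y2,
          ((c * c * (W (u1 - u2) y1 * W u2 y2)) * Real.logb q (W (u1 - u2) y1 / Q y1)
          + (c * c * (W (u1 - u2) y1 * W u2 y2)) * Real.logb q (W u2 y2 / Q y2)) := by
    rw [two_mul]
    nth_rewrite 1 [← S1]
    nth_rewrite 1 [← S2]
    exact sum_add4 _ _
  rw [L1, L2, hL3, sum_add4]
  refine Finset.sum_congr rfl fun u1 _ => Finset.sum_congr rfl fun u2 _ =>
    Finset.sum_congr rfl fun y1 _ => Finset.sum_congr rfl fun y2 _ => ?_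
  by_cases ha : W (u1 - u2) y1 = 0
  · simp [ha]
  · by_cases hb : W u2 y2 = 0
    · simp [hb]
    · have ha' : 0 < W (u1 - u2) y1 := lt_of_le_of_ne (hpos _ _) (Ne.symm ha)
      have hb' : 0 < W u2 y2 := lt_of_le_of_ne (hpos _ _) (Ne.symm hb)
      have hQ1 : 0 < Q y1 := hQpos _ _ ha'
      have hQ2 : 0 < Q y2 := hQpos _ _ hb'
      have hM : 0 < M u1 y1 y2 :=
        lt_of_lt_of_le (by positivity) (hMge u1 u2 y1 y2)
      rw [← mul_add, ← mul_add]
      congr 1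
      exact logb_split_aux q _ _ _ _ _ ha' hb' hQ1 hQ2 hM
end

section
/- With W, W⁻, W⁺ as in the polar transform (U₁ = X₁+X₂, U₂ = X₂ mod q, uniform inputs), one has I(W⁻) ≤ I(W) ≤ I(W⁺). -/
open Finset Real

noncomputable def natMI (q : ℕ) [NeZero q] {Y : Type*} [Fintype Y] (W : ZMod q → Y → ℝ) : ℝ :=
  ∑ x, ∑ y, (1 / q : ℝ) * (W x y * Real.log (W x y / ((1 / q : ℝ) * ∑ x', W x' y)))

lemma log_sum_ineq {ι : Type*} [Fintype ι] (a b : ι → ℝ)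
    (ha : ∀ i, 0 ≤ a i) (hb : ∀ i, 0 ≤ b i) (hab : ∀ i, a i ≠ 0 → b i ≠ 0) :
    (∑ i, a i) * Real.log ((∑ i, a i) / (∑ i, b i)) ≤ ∑ i, a i * Real.log (a i / b i) := by
  set Sa := ∑ i, a i with hSa
  set Sb := ∑ i, b i with hSb
  rcases eq_or_lt_of_le (Finset.sum_nonneg fun i _ => ha i) with h0 | hSapos
  · have hz : ∀ i ∈ Finset.univ, a i = 0 :=
      (Finset.sum_eq_zero_iff_of_nonneg fun i _ => ha i).mp h0.symm
    have : Sa = 0 := h0.symm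
    rw [this]
    simp only [zero_mul]
    rw [Finset.sum_eq_zero fun i hi => by rw [hz i hi, zero_mul]]
  · have hSbpos : 0 < Sb := by
      obtain ⟨i, -, hi⟩ := Finset.exists_ne_zero_of_sum_ne_zero hSapos.ne'
      have hbi : 0 < b i := (hb i).lt_of_ne' (hab i hi)
      exact hbi.trans_le (Finset.single_le_sum (fun j _ => hb j) (Finset.mem_univ i))
    have key : ∀ i, a i - Sa / Sb * b i ≤ a i * (Real.log (a i / b i) - Real.log (Sa / Sb)) := by
      intro i
      rcases (ha i).eq_or_lt with h | hai
      · rw [← h]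
        simp only [sub_nonpos, zero_mul, zero_sub, zero_mul]
        have : 0 ≤ Sa / Sb * b i := mul_nonneg (div_nonneg hSapos.le hSbpos.le) (hb i)
        linarith
      · have hbi : 0 < b i := (hb i).lt_of_ne' (hab i hai.ne')
        set x := (b i * Sa) / (a i * Sb) with hx
        have hxpos : 0 < x := by positivity
        have h1 : Real.log x ≤ x - 1 := Real.log_le_sub_one_of_pos hxpos
        have hlogx : Real.log x = Real.log (Sa / Sb) - Real.log (a i / b i) := by
          rw [hx, Real.log_div (by positivity) (by positivity),
            Real.log_div hSapos.ne' hSbpos.ne', Real.log_div hai.ne' hbi.ne',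
            Real.log_mul hbi.ne' hSapos.ne', Real.log_mul hai.ne' hSbpos.ne']
          ring
        have h2 : a i * Real.log x ≤ a i * x - a i := by nlinarith
        have h3 : a i * x = b i * Sa / Sb := by
          rw [hx]; field_simp
        rw [hlogx] at h2
        rw [h3] at h2
        have hE : a i * (Real.log (a i / b i) - Real.log (Sa / Sb))
            = -(a i * (Real.log (Sa / Sb) - Real.log (a i / b i))) := by ring
        have hE2 : b i * Sa / Sb = Sa / Sb * b i := by ring
        rw [hE]
        linarith [h2, hE2.symm.le, hE2.le]
    calc Sa * Real.log (Sa / Sb) = ∑ i, a i * Real.log (Sa / Sb) := by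
          rw [← Finset.sum_mul]
      _ ≤ ∑ i, a i * Real.log (a i / b i) := by
          have := Finset.sum_le_sum (fun i (_ : i ∈ Finset.univ) => key i)
          have hsum : ∑ i, (a i - Sa / Sb * b i) = 0 := by
            rw [Finset.sum_sub_distrib, ← Finset.mul_sum, ← hSa, ← hSb,
              div_mul_cancel₀ _ hSbpos.ne']
            ring
          rw [hsum] at this
          have := Finset.sum_le_sum (fun i (_ : i ∈ Finset.univ) => key i)
          -- ∑ (a i - c b i) ≤ ∑ a i (log(ai/bi) - log(Sa/Sb))
          have hexp : ∑ i, a i * (Real.log (a i / b i) - Real.log (Sa / Sb))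
              = ∑ i, a i * Real.log (a i / b i) - ∑ i, a i * Real.log (Sa / Sb) := by
            rw [← Finset.sum_sub_distrib]
            exact Finset.sum_congr rfl fun i _ => by ring
          rw [hsum, hexp] at this
          linarith

section main

variable (q : ℕ) [NeZero q] {Y : Type*} [Fintype Y] (W : ZMod q → Y → ℝ)

lemma reindex_sub (u2 : ZMod q) (f : ZMod q → ℝ) : ∑ u1, f (u1 - u2) = ∑ x, f x :=
  Equiv.sum_comp (Equiv.subRight u2) f

lemma cq_pos : (0:ℝ) < 1 / q := by
  have : (0:ℝ) < q := by exact_mod_cast Nat.pos_of_ne_zero (NeZero.ne q)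
  positivity

lemma minusMarg (y1 y2 : Y) :
    ∑ u', polarMinus q W u' (y1, y2)
      = (1/q:ℝ) * ((∑ x', W x' y1) * (∑ x', W x' y2)) := by
  simp only [polarMinus]
  calc ∑ u' : ZMod q, (1/q:ℝ) * ∑ u2, W (u' - u2) y1 * W u2 y2
      = (1/q:ℝ) * ∑ u' : ZMod q, ∑ u2, W (u' - u2) y1 * W u2 y2 := by
        rw [Finset.mul_sum]
    _ = (1/q:ℝ) * ∑ u2 : ZMod q, ∑ u', W (u' - u2) y1 * W u2 y2 := by
        rw [Finset.sum_comm]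
    _ = (1/q:ℝ) * ∑ u2 : ZMod q, (∑ u', W (u' - u2) y1) * W u2 y2 := by
        congr 1
        exact Finset.sum_congr rfl fun u2 _ => by rw [Finset.sum_mul]
    _ = (1/q:ℝ) * ∑ u2 : ZMod q, (∑ x', W x' y1) * W u2 y2 := by
        congr 1
        exact Finset.sum_congr rfl fun u2 _ => by
          rw [reindex_sub q u2 (fun x => W x y1)]
    _ = (1/q:ℝ) * ((∑ x', W x' y1) * (∑ x', W x' y2)) := by
        rw [← Finset.mul_sum]

lemma plusMarg (y1 y2 : Y) (u1 : ZMod q) :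
    ∑ u2', polarPlus q W u2' (y1, y2, u1)
      = (1/q:ℝ) * ∑ u2', W (u1 - u2') y1 * W u2' y2 := by
  simp only [polarPlus]
  rw [Finset.mul_sum]
  exact Finset.sum_congr rfl fun u2' _ => by ring

lemma natMIminus :
    natMI q (polarMinus q W) = ∑ u1 : ZMod q, ∑ y1 : Y, ∑ y2 : Y, ∑ u2 : ZMod q,
      (1/q:ℝ)^2 * (W (u1 - u2) y1 * W u2 y2) *
        Real.log ((∑ u2', W (u1 - u2') y1 * W u2' y2) /
          ((1/q:ℝ) * ((∑ x', W x' y1) * (∑ x', W x' y2)))) := by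
  have hc := cq_pos q
  unfold natMI
  refine Finset.sum_congr rfl fun u1 _ => ?_
  rw [Fintype.sum_prod_type]
  refine Finset.sum_congr rfl fun y1 _ => Finset.sum_congr rfl fun y2 _ => ?_
  rw [minusMarg]
  have hP : polarMinus q W u1 (y1, y2)
      = (1/q:ℝ) * ∑ u2', W (u1 - u2') y1 * W u2' y2 := rfl
  rw [hP, mul_div_mul_left _ _ hc.ne']
  calc (1/q:ℝ) * (((1/q:ℝ) * ∑ u2', W (u1 - u2') y1 * W u2' y2) *
        Real.log ((∑ u2', W (u1 - u2') y1 * W u2' y2) /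
          ((1/q:ℝ) * ((∑ x', W x' y1) * (∑ x', W x' y2)))))
      = (∑ u2', W (u1 - u2') y1 * W u2' y2) * ((1/q:ℝ)^2 *
        Real.log ((∑ u2', W (u1 - u2') y1 * W u2' y2) /
          ((1/q:ℝ) * ((∑ x', W x' y1) * (∑ x', W x' y2))))) := by ring
    _ = ∑ u2, (W (u1 - u2) y1 * W u2 y2) * ((1/q:ℝ)^2 *
        Real.log ((∑ u2', W (u1 - u2') y1 * W u2' y2) /
          ((1/q:ℝ) * ((∑ x', W x' y1) * (∑ x', W x' y2))))) := by
        rw [← Finset.sum_mul]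
    _ = _ := Finset.sum_congr rfl fun u2 _ => by ring

lemma natMIplus :
    natMI q (polarPlus q W) = ∑ u2 : ZMod q, ∑ y1 : Y, ∑ y2 : Y, ∑ u1 : ZMod q,
      (1/q:ℝ)^2 * (W (u1 - u2) y1 * W u2 y2) *
        Real.log ((W (u1 - u2) y1 * W u2 y2) /
          ((1/q:ℝ) * ∑ u2', W (u1 - u2') y1 * W u2' y2)) := by
  have hc := cq_pos q
  unfold natMI
  refine Finset.sum_congr rfl fun u2 _ => ?_
  rw [Fintype.sum_prod_type]
  refine Finset.sum_congr rfl fun y1 _ => ?_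
  rw [Fintype.sum_prod_type]
  refine Finset.sum_congr rfl fun y2 _ => Finset.sum_congr rfl fun u1 _ => ?_
  rw [plusMarg]
  have hP : polarPlus q W u2 (y1, y2, u1)
      = (1/q:ℝ) * (W (u1 - u2) y1 * W u2 y2) := by
    simp only [polarPlus]; ring
  rw [hP, mul_div_mul_left _ _ hc.ne']
  ring


lemma mutInfo_eq_natMI (q : ℕ) [NeZero q] {Y : Type*} [Fintype Y] (W : ZMod q → Y → ℝ) :
    mutInfo q W = natMI q W / Real.log q := by
  unfold mutInfo natMI
  rw [Finset.sum_div]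
  refine Finset.sum_congr rfl fun x _ => ?_
  rw [Finset.sum_div]
  refine Finset.sum_congr rfl fun y _ => ?_
  rw [Real.logb]
  ring

lemma sum_comm3 {α β γ M : Type*} [AddCommMonoid M] [Fintype α] [Fintype β] [Fintype γ]
    (f : α → β → γ → M) :
    ∑ a, ∑ b, ∑ c, f a b c = ∑ c, ∑ a, ∑ b, f a b c :=
  calc ∑ a, ∑ b, ∑ c, f a b c = ∑ a, ∑ c, ∑ b, f a b c :=
        Finset.sum_congr rfl fun a _ => Finset.sum_comm
    _ = ∑ c, ∑ a, ∑ b, f a b c := Finset.sum_comm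

lemma sum_comm4 {α β γ δ M : Type*} [AddCommMonoid M] [Fintype α] [Fintype β] [Fintype γ]
    [Fintype δ] (f : α → β → γ → δ → M) :
    ∑ a, ∑ b, ∑ c, ∑ d, f a b c d = ∑ d, ∑ a, ∑ b, ∑ c, f a b c d :=
  calc ∑ a, ∑ b, ∑ c, ∑ d, f a b c d = ∑ a, ∑ d, ∑ b, ∑ c, f a b c d :=
        Finset.sum_congr rfl fun a _ => sum_comm3 fun b c d => f a b c d
    _ = ∑ d, ∑ a, ∑ b, ∑ c, f a b c d := Finset.sum_comm

lemma le_marg (hW0 : ∀ x y, 0 ≤ W x y) (x : ZMod q) (y : Y) : W x y ≤ ∑ x', W x' y :=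
  Finset.single_le_sum (f := fun x' => W x' y) (fun i _ => hW0 i y) (Finset.mem_univ x)

-- the double sum of c * W is 1
lemma sum_c_row (hW1 : ∀ x, ∑ y, W x y = 1) (u : ZMod q) : ∑ y, (1 / q : ℝ) * W u y = 1 / q := by
  rw [← Finset.mul_sum, hW1]
  ring

lemma sum_const_zmod (r : ℝ) : ∑ _u : ZMod q, r = q * r := by
  rw [Finset.sum_const, Finset.card_univ, ZMod.card q, nsmul_eq_mul]

lemma q_mul_c : (q : ℝ) * (1 / q) = 1 := by
  have : (q:ℝ) ≠ 0 := by exact_mod_cast (NeZero.ne q)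
  field_simp

-- Sum A : quadruple sum with log(W1/(c m1)) equals natMI
lemma sumA (hW1 : ∀ x, ∑ y, W x y = 1) : ∑ u2 : ZMod q, ∑ u1 : ZMod q, ∑ y1 : Y, ∑ y2 : Y,
      ((1/q:ℝ)^2 * (W (u1 - u2) y1 * W u2 y2)) *
        Real.log (W (u1 - u2) y1 / ((1/q:ℝ) * ∑ x', W x' y1))
    = natMI q W := by
  have step1 : ∀ u2 u1 y1 : _, ∑ y2 : Y,
      ((1/q:ℝ)^2 * (W (u1 - u2) y1 * W u2 y2)) *
        Real.log (W (u1 - u2) y1 / ((1/q:ℝ) * ∑ x', W x' y1))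
      = (1/q:ℝ) * ((1/q:ℝ) * (W (u1 - u2) y1 *
          Real.log (W (u1 - u2) y1 / ((1/q:ℝ) * ∑ x', W x' y1)))) := by
    intro u2 u1 y1
    rw [show ∀ K : ℝ, (∑ y2 : Y, ((1/q:ℝ)^2 * (W (u1 - u2) y1 * W u2 y2)) * K)
        = (∑ y2 : Y, W u2 y2) * ((1/q:ℝ)^2 * W (u1 - u2) y1 * K) from
        fun K => by rw [Finset.sum_mul]; exact Finset.sum_congr rfl fun y2 _ => by ring,
      hW1]
    ring
  simp only [step1]
  have step2 : ∀ u2 : ZMod q, ∑ u1 : ZMod q, ∑ y1 : Y,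
      (1/q:ℝ) * ((1/q:ℝ) * (W (u1 - u2) y1 *
          Real.log (W (u1 - u2) y1 / ((1/q:ℝ) * ∑ x', W x' y1))))
      = (1/q:ℝ) * natMI q W := by
    intro u2
    calc ∑ u1 : ZMod q, ∑ y1 : Y, (1/q:ℝ) * ((1/q:ℝ) * (W (u1 - u2) y1 *
          Real.log (W (u1 - u2) y1 / ((1/q:ℝ) * ∑ x', W x' y1))))
        = ∑ u1 : ZMod q, (1/q:ℝ) * ∑ y1 : Y, (1/q:ℝ) * (W (u1 - u2) y1 *
          Real.log (W (u1 - u2) y1 / ((1/q:ℝ) * ∑ x', W x' y1))) :=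
          Finset.sum_congr rfl fun u1 _ => by rw [Finset.mul_sum]
      _ = (1/q:ℝ) * ∑ u1 : ZMod q, ∑ y1 : Y, (1/q:ℝ) * (W (u1 - u2) y1 *
          Real.log (W (u1 - u2) y1 / ((1/q:ℝ) * ∑ x', W x' y1))) := by
          rw [Finset.mul_sum]
      _ = (1/q:ℝ) * natMI q W := by
          congr 1
          exact reindex_sub q u2 (fun x => ∑ y1, (1/q:ℝ) * (W x y1 *
            Real.log (W x y1 / ((1/q:ℝ) * ∑ x', W x' y1))))
  simp only [step2]
  rw [sum_const_zmod q, ← mul_assoc, q_mul_c, one_mul]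

-- Sum B : quadruple sum with log(W2/(c m2)) equals natMI
lemma sumB (hW1 : ∀ x, ∑ y, W x y = 1) : ∑ u2 : ZMod q, ∑ u1 : ZMod q, ∑ y1 : Y, ∑ y2 : Y,
      ((1/q:ℝ)^2 * (W (u1 - u2) y1 * W u2 y2)) *
        Real.log (W u2 y2 / ((1/q:ℝ) * ∑ x', W x' y2))
    = natMI q W := by
  have step1 : ∀ u2 u1 : ZMod q, ∑ y1 : Y, ∑ y2 : Y,
      ((1/q:ℝ)^2 * (W (u1 - u2) y1 * W u2 y2)) *
        Real.log (W u2 y2 / ((1/q:ℝ) * ∑ x', W x' y2))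
      = (1/q:ℝ) * ∑ y2 : Y, (1/q:ℝ) * (W u2 y2 *
          Real.log (W u2 y2 / ((1/q:ℝ) * ∑ x', W x' y2))) := by
    intro u2 u1
    rw [Finset.mul_sum]
    rw [show (∑ y1 : Y, ∑ y2 : Y, ((1/q:ℝ)^2 * (W (u1 - u2) y1 * W u2 y2)) *
        Real.log (W u2 y2 / ((1/q:ℝ) * ∑ x', W x' y2)))
      = ∑ y1 : Y, W (u1 - u2) y1 * ∑ y2 : Y, ((1/q:ℝ)^2 * W u2 y2) *
        Real.log (W u2 y2 / ((1/q:ℝ) * ∑ x', W x' y2)) from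
      Finset.sum_congr rfl fun y1 _ => by
        rw [Finset.mul_sum]; exact Finset.sum_congr rfl fun y2 _ => by ring]
    rw [← Finset.sum_mul, hW1, one_mul]
    exact Finset.sum_congr rfl fun y2 _ => by ring
  simp only [step1]
  have step2 : ∀ u2 : ZMod q, ∑ u1 : ZMod q, (1/q:ℝ) * ∑ y2 : Y, (1/q:ℝ) * (W u2 y2 *
      Real.log (W u2 y2 / ((1/q:ℝ) * ∑ x', W x' y2)))
      = ∑ y2 : Y, (1/q:ℝ) * (W u2 y2 *
          Real.log (W u2 y2 / ((1/q:ℝ) * ∑ x', W x' y2))) := by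
    intro u2
    rw [sum_const_zmod q, ← mul_assoc, q_mul_c, one_mul]
  simp only [step2]
  rfl


lemma log_identity {c W1 W2 s g1 g2 : ℝ} (hc : 0 < c) (h1 : 0 < W1) (h2 : 0 < W2)
    (hs : 0 < s) (hg1 : 0 < g1) (hg2 : 0 < g2) :
    Real.log ((W1*W2)/(c*s)) + Real.log (s/(c*(g1*g2)))
      = Real.log (W1/(c*g1)) + Real.log (W2/(c*g2)) := by
  rw [Real.log_div (by positivity) (by positivity), Real.log_div hs.ne' (by positivity),
    Real.log_div h1.ne' (by positivity), Real.log_div h2.ne' (by positivity),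
    Real.log_mul h1.ne' h2.ne', Real.log_mul hc.ne' hs.ne',
    Real.log_mul hc.ne' (by positivity), Real.log_mul hg1.ne' hg2.ne',
    Real.log_mul hc.ne' hg1.ne', Real.log_mul hc.ne' hg2.ne']
  ring

lemma comb4 {α β γ δ : Type*} [Fintype α] [Fintype β] [Fintype γ] [Fintype δ]
    (F G : α → β → γ → δ → ℝ) :
    (∑ a, ∑ b, ∑ c, ∑ d, F a b c d) + (∑ a, ∑ b, ∑ c, ∑ d, G a b c d)
      = ∑ a, ∑ b, ∑ c, ∑ d, (F a b c d + G a b c d) := by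
  rw [← Finset.sum_add_distrib]
  refine Finset.sum_congr rfl fun a _ => ?_
  rw [← Finset.sum_add_distrib]
  refine Finset.sum_congr rfl fun b _ => ?_
  rw [← Finset.sum_add_distrib]
  refine Finset.sum_congr rfl fun c _ => ?_
  rw [← Finset.sum_add_distrib]

lemma key2 (hW0 : ∀ x y, 0 ≤ W x y) (hW1 : ∀ x, ∑ y, W x y = 1) :
    natMI q (polarMinus q W) + natMI q (polarPlus q W) = 2 * natMI q W := by
  have hc := cq_pos q
  rw [natMIminus, natMIplus]
  rw [sum_comm4 (fun u1 y1 y2 u2 => (1/q:ℝ)^2 * (W (u1 - u2) y1 * W u2 y2) *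
        Real.log ((∑ u2', W (u1 - u2') y1 * W u2' y2) /
          ((1/q:ℝ) * ((∑ x', W x' y1) * (∑ x', W x' y2)))))]
  rw [show (∑ u2 : ZMod q, ∑ y1 : Y, ∑ y2 : Y, ∑ u1 : ZMod q,
      (1/q:ℝ)^2 * (W (u1 - u2) y1 * W u2 y2) *
        Real.log ((W (u1 - u2) y1 * W u2 y2) /
          ((1/q:ℝ) * ∑ u2', W (u1 - u2') y1 * W u2' y2)))
    = ∑ u2 : ZMod q, ∑ u1 : ZMod q, ∑ y1 : Y, ∑ y2 : Y,
      (1/q:ℝ)^2 * (W (u1 - u2) y1 * W u2 y2) *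
        Real.log ((W (u1 - u2) y1 * W u2 y2) /
          ((1/q:ℝ) * ∑ u2', W (u1 - u2') y1 * W u2' y2)) from
    Finset.sum_congr rfl fun u2 _ => sum_comm3 fun y1 y2 u1 =>
      (1/q:ℝ)^2 * (W (u1 - u2) y1 * W u2 y2) *
        Real.log ((W (u1 - u2) y1 * W u2 y2) /
          ((1/q:ℝ) * ∑ u2', W (u1 - u2') y1 * W u2' y2))]
  rw [show (2:ℝ) * natMI q W
      = (∑ u2 : ZMod q, ∑ u1 : ZMod q, ∑ y1 : Y, ∑ y2 : Y,
          ((1/q:ℝ)^2 * (W (u1 - u2) y1 * W u2 y2)) *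
            Real.log (W (u1 - u2) y1 / ((1/q:ℝ) * ∑ x', W x' y1)))
        + (∑ u2 : ZMod q, ∑ u1 : ZMod q, ∑ y1 : Y, ∑ y2 : Y,
          ((1/q:ℝ)^2 * (W (u1 - u2) y1 * W u2 y2)) *
            Real.log (W u2 y2 / ((1/q:ℝ) * ∑ x', W x' y2))) from by
    rw [sumA q W hW1, sumB q W hW1]; ring]
  rw [comb4, comb4]
  refine Finset.sum_congr rfl fun u2 _ => Finset.sum_congr rfl fun u1 _ =>
    Finset.sum_congr rfl fun y1 _ => Finset.sum_congr rfl fun y2 _ => ?_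
  by_cases h1 : W (u1 - u2) y1 = 0
  · simp [h1]
  by_cases h2 : W u2 y2 = 0
  · simp [h2]
  have hw1 : 0 < W (u1 - u2) y1 := (hW0 _ _).lt_of_ne' h1
  have hw2 : 0 < W u2 y2 := (hW0 _ _).lt_of_ne' h2
  have hm1 : 0 < ∑ x', W x' y1 := lt_of_lt_of_le hw1 (le_marg q W hW0 _ _)
  have hm2 : 0 < ∑ x', W x' y2 := lt_of_lt_of_le hw2 (le_marg q W hW0 _ _)
  have hs : 0 < ∑ u2', W (u1 - u2') y1 * W u2' y2 :=
    lt_of_lt_of_le (mul_pos hw1 hw2)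
      (Finset.single_le_sum (f := fun u2' => W (u1 - u2') y1 * W u2' y2)
        (fun i _ => mul_nonneg (hW0 _ _) (hW0 _ _)) (Finset.mem_univ u2))
  have hlog := log_identity hc hw1 hw2 hs hm1 hm2
  linear_combination ((1/q:ℝ)^2 * (W (u1 - u2) y1 * W u2 y2)) * hlog

lemma key1 (hW0 : ∀ x y, 0 ≤ W x y) (hW1 : ∀ x, ∑ y, W x y = 1) :
    natMI q (polarMinus q W) ≤ natMI q W := by
  have hc := cq_pos q
  rw [natMIminus]
  have hbound : ∀ (u1 : ZMod q) (y1 y2 : Y),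
      (∑ u2 : ZMod q, (1/q:ℝ)^2 * (W (u1 - u2) y1 * W u2 y2) *
          Real.log ((∑ u2', W (u1 - u2') y1 * W u2' y2) /
            ((1/q:ℝ) * ((∑ x', W x' y1) * (∑ x', W x' y2)))))
      ≤ ∑ u2 : ZMod q, (1/q:ℝ)^2 * ((W (u1 - u2) y1 * W u2 y2) *
          Real.log ((W (u1 - u2) y1 * W u2 y2) /
            ((1/q:ℝ) * ((∑ x', W x' y1) * W u2 y2)))) := by
    intro u1 y1 y2
    have hsum_b : ∑ u2 : ZMod q, (1/q:ℝ) * ((∑ x', W x' y1) * W u2 y2)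
        = (1/q:ℝ) * ((∑ x', W x' y1) * (∑ x', W x' y2)) := by
      rw [← Finset.mul_sum, ← Finset.mul_sum]
    have hls := log_sum_ineq (fun u2 => W (u1 - u2) y1 * W u2 y2)
        (fun u2 => (1/q:ℝ) * ((∑ x', W x' y1) * W u2 y2))
        (fun u2 => mul_nonneg (hW0 _ _) (hW0 _ _))
        (fun u2 => mul_nonneg hc.le (mul_nonneg
          (Finset.sum_nonneg fun x' _ => hW0 _ _) (hW0 _ _)))
        (fun u2 h => by
          have h2 : W u2 y2 ≠ 0 := fun hz => h (by show W (u1 - u2) y1 * W u2 y2 = 0; rw [hz, mul_zero])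
          have h1 : W (u1 - u2) y1 ≠ 0 := fun hz => h (by show W (u1 - u2) y1 * W u2 y2 = 0; rw [hz, zero_mul])
          have hm1 : 0 < ∑ x', W x' y1 :=
            lt_of_lt_of_le ((hW0 _ _).lt_of_ne' h1) (le_marg q W hW0 _ _)
          exact mul_ne_zero hc.ne' (mul_ne_zero hm1.ne' h2))
    rw [hsum_b] at hls
    calc ∑ u2 : ZMod q, (1/q:ℝ)^2 * (W (u1 - u2) y1 * W u2 y2) *
          Real.log ((∑ u2', W (u1 - u2') y1 * W u2' y2) /
            ((1/q:ℝ) * ((∑ x', W x' y1) * (∑ x', W x' y2))))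
        = (∑ u2 : ZMod q, W (u1 - u2) y1 * W u2 y2) * ((1/q:ℝ)^2 *
          Real.log ((∑ u2', W (u1 - u2') y1 * W u2' y2) /
            ((1/q:ℝ) * ((∑ x', W x' y1) * (∑ x', W x' y2))))) :=
          ((Finset.sum_mul _ _ _).trans (Finset.sum_congr rfl fun u2 _ => by ring)).symm
      _ = (1/q:ℝ)^2 * ((∑ u2 : ZMod q, W (u1 - u2) y1 * W u2 y2) *
          Real.log ((∑ u2, W (u1 - u2) y1 * W u2 y2) /
            ((1/q:ℝ) * ((∑ x', W x' y1) * (∑ x', W x' y2))))) := by ring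
      _ ≤ (1/q:ℝ)^2 * ∑ u2 : ZMod q, (W (u1 - u2) y1 * W u2 y2) *
          Real.log ((W (u1 - u2) y1 * W u2 y2) /
            ((1/q:ℝ) * ((∑ x', W x' y1) * W u2 y2))) :=
          mul_le_mul_of_nonneg_left hls (by positivity)
      _ = ∑ u2 : ZMod q, (1/q:ℝ)^2 * ((W (u1 - u2) y1 * W u2 y2) *
          Real.log ((W (u1 - u2) y1 * W u2 y2) /
            ((1/q:ℝ) * ((∑ x', W x' y1) * W u2 y2)))) :=
          Finset.mul_sum _ _ _
  refine le_trans (Finset.sum_le_sum fun u1 _ => Finset.sum_le_sum fun y1 _ =>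
    Finset.sum_le_sum fun y2 _ => hbound u1 y1 y2) ?_
  have hpt : ∀ (u1 u2 : ZMod q) (y1 y2 : Y),
      (1/q:ℝ)^2 * ((W (u1 - u2) y1 * W u2 y2) *
          Real.log ((W (u1 - u2) y1 * W u2 y2) /
            ((1/q:ℝ) * ((∑ x', W x' y1) * W u2 y2))))
      = ((1/q:ℝ)^2 * (W (u1 - u2) y1 * W u2 y2)) *
          Real.log (W (u1 - u2) y1 / ((1/q:ℝ) * ∑ x', W x' y1)) := by
    intro u1 u2 y1 y2
    by_cases h1 : W (u1 - u2) y1 = 0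
    · simp [h1]
    by_cases h2 : W u2 y2 = 0
    · simp [h2]
    have hdiv : (W (u1 - u2) y1 * W u2 y2) /
        ((1/q:ℝ) * ((∑ x', W x' y1) * W u2 y2))
        = W (u1 - u2) y1 / ((1/q:ℝ) * ∑ x', W x' y1) := by
      rw [show (1/q:ℝ) * ((∑ x', W x' y1) * W u2 y2)
          = ((1/q:ℝ) * ∑ x', W x' y1) * W u2 y2 from by ring]
      rw [mul_div_mul_right _ _ h2]
    rw [hdiv]
    ring
  simp only [hpt]
  rw [sum_comm4 (fun u1 y1 y2 u2 => ((1/q:ℝ)^2 * (W (u1 - u2) y1 * W u2 y2)) *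
    Real.log (W (u1 - u2) y1 / ((1/q:ℝ) * ∑ x', W x' y1)))]
  exact (sumA q W hW1).le

end main


/-- `I(W⁻) ≤ I(W) ≤ I(W⁺)` for the polar transform. -/
theorem stmt14 (q : ℕ) [NeZero q] (hq : 2 ≤ q) {Y : Type*} [Fintype Y]
    (W : ZMod q → Y → ℝ) (hW : IsChannel q W) :
    mutInfo q (polarMinus q W) ≤ mutInfo q W ∧
    mutInfo q W ≤ mutInfo q (polarPlus q W) := by
  obtain ⟨hW0, hW1⟩ := hW
  have hq1 : (1:ℝ) < q := by
    have : (2:ℝ) ≤ q := by exact_mod_cast hq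
    linarith
  have hlogq : 0 < Real.log q := Real.log_pos hq1
  have h1 := key1 q W hW0 hW1
  have h2 := key2 q W hW0 hW1
  rw [mutInfo_eq_natMI q (polarMinus q W), mutInfo_eq_natMI q W,
    mutInfo_eq_natMI q (polarPlus q W)]
  constructor
  · exact div_le_div_of_nonneg_right h1 hlogq.le
  · exact div_le_div_of_nonneg_right (by linarith) hlogq.le
end

section
/- Let (I_n)_{n≥0} be a martingale with values in [0,1] (with respect to some filtration) such that |I_{n+1} − I_n| → 0 in L¹ and such that there exists a function ε: (0,1/2) → (0,∞) with the property: almost surely, for every n, if I_n ∈ (δ, 1−δ) then E[|I_{n+1} − I_n| | F_n] ≥ ε(δ)/2. Then I_n converges almost surely to a random variable I_∞ ∈ {0,1}, and P[I_∞ = 1] = E[I_0]. -/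
/-!
A martingale with values in `[0, 1]` converges almost surely to some `I∞`, and by dominated
convergence `E[I∞] = E[I₀]`. On the event `{Iₙ ∈ (δ, 1 - δ)}` the expected next increment is
at least `ε(δ)/2`, so this event has probability at most `2 E|Iₙ₊₁ - Iₙ| / ε(δ) → 0`. Hence almost
no path stays in `(δ, 1 - δ)` from some time on, so `I∞ ∉ (δ, 1 - δ)` almost surely; letting `δ`
run through a sequence tending to `0` gives `I∞ ∈ {0, 1}`, and then `P[I∞ = 1] = E[I∞] = E[I₀]`.
-/

open MeasureTheory Filter Set Topology

theorem eq_zero_or_eq_one_of_forall_notMem_Ioo {x : ℝ} (hx : x ∈ Icc (0 : ℝ) 1)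
    (h : ∀ k : ℕ, x ∉ Ioo (1 / ((k : ℝ) + 3)) (1 - 1 / ((k : ℝ) + 3))) : x = 0 ∨ x = 1 := by
  by_contra! hne
  have hx0 : 0 < x := lt_of_le_of_ne hx.1 (Ne.symm hne.1)
  have hx1 : x < 1 := lt_of_le_of_ne hx.2 hne.2
  obtain ⟨k, hk⟩ := exists_nat_one_div_lt (lt_min hx0 (sub_pos.2 hx1))
  have hk3 : 1 / ((k : ℝ) + 3) ≤ 1 / ((k : ℝ) + 1) :=
    one_div_le_one_div_of_le (by positivity) (by linarith)
  exact h k ⟨by linarith [min_le_left x (1 - x)], by linarith [min_le_right x (1 - x)]⟩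

namespace MeasureTheory

variable {Ω : Type*} {m m₀ : MeasurableSpace Ω} {μ : Measure Ω}

theorem mul_measureReal_le_integral_of_le_condExp [IsFiniteMeasure μ] (hm : m ≤ m₀)
    {g : Ω → ℝ} (hg : Integrable g μ) (hg_nonneg : 0 ≤ᵐ[μ] g) {A : Set Ω}
    (hA : MeasurableSet[m] A) {c : ℝ} (hc : ∀ᵐ ω ∂μ, ω ∈ A → c ≤ μ[g | m] ω) :
    c * μ.real A ≤ ∫ ω, g ω ∂μ :=
  calc c * μ.real A = ∫ _ in A, c ∂μ := by rw [setIntegral_const, smul_eq_mul, mul_comm]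
    _ ≤ ∫ ω in A, (μ[g | m]) ω ∂μ :=
      setIntegral_mono_on_ae (integrableOn_const (measure_ne_top μ A))
        integrable_condExp.integrableOn (hm A hA) hc
    _ = ∫ ω in A, g ω ∂μ := setIntegral_condExp hm hg hA
    _ ≤ ∫ ω, g ω ∂μ := setIntegral_le_integral hg hg_nonneg

theorem ae_notMem_of_tendsto_measureReal_zero [IsFiniteMeasure μ] {α : Type*}
    [TopologicalSpace α] {X : ℕ → Ω → α} {L : Ω → α}
    (hX : ∀ᵐ ω ∂μ, Tendsto (fun n => X n ω) atTop (𝓝 (L ω))) {U : Set α} (hU : IsOpen U)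
    (hμ : Tendsto (fun n => μ.real {ω | X n ω ∈ U}) atTop (𝓝 0)) :
    ∀ᵐ ω ∂μ, L ω ∉ U := by
  have h_null : ∀ N, μ {ω | ∀ n ≥ N, X n ω ∈ U} = 0 := fun N => by
    refine (measureReal_eq_zero_iff).1 (le_antisymm ?_ measureReal_nonneg)
    exact ge_of_tendsto hμ (eventually_atTop.2 ⟨N, fun n hn =>
      measureReal_mono fun ω hω => hω n hn⟩)
  filter_upwards [hX, ae_all_iff.2 fun N => measure_eq_zero_iff_ae_notMem.1 (h_null N)]
    with ω hω h_not_stays hL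
  obtain ⟨N, hN⟩ := eventually_atTop.1 (hω.eventually (hU.mem_nhds hL))
  exact h_not_stays N hN

theorem integral_eq_measureReal_of_ae_eq_zero_or_one {f : Ω → ℝ} (hf : Measurable f)
    (h01 : ∀ᵐ ω ∂μ, f ω = 0 ∨ f ω = 1) :
    ∫ ω, f ω ∂μ = μ.real {ω | f ω = 1} := by
  have h_ind : f =ᵐ[μ] {ω | f ω = 1}.indicator 1 := by
    filter_upwards [h01] with ω hω
    rcases hω with h | h <;> simp [indicator, h]
  rw [integral_congr_ae h_ind]
  exact integral_indicator_one (hf (measurableSet_singleton 1))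

variable [IsFiniteMeasure μ] {ℱ : Filtration ℕ m₀} {f : ℕ → Ω → ℝ}

theorem Submartingale.ae_tendsto_limitProcess_of_norm_le (hf : Submartingale f ℱ μ) {C : ℝ}
    (hC : ∀ n, ∀ᵐ ω ∂μ, ‖f n ω‖ ≤ C) :
    ∀ᵐ ω ∂μ, Tendsto (fun n => f n ω) atTop (𝓝 (ℱ.limitProcess f μ ω)) := by
  refine hf.ae_tendsto_limitProcess (R := (μ univ).toNNReal * C.toNNReal) fun n => ?_
  calc eLpNorm (f n) 1 μ ≤ μ univ * ENNReal.ofReal C := by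
        simpa using eLpNorm_le_of_ae_bound (p := 1) (hC n)
    _ = _ := by rw [ENNReal.coe_mul, ENNReal.coe_toNNReal (measure_ne_top μ univ)]; rfl

theorem Martingale.integral_eq_integral_zero (hf : Martingale f ℱ μ) (n : ℕ) :
    ∫ ω, f n ω ∂μ = ∫ ω, f 0 ω ∂μ :=
  calc ∫ ω, f n ω ∂μ = ∫ ω, (μ[f n | ℱ 0]) ω ∂μ := (integral_condExp (ℱ.le 0)).symm
    _ = ∫ ω, f 0 ω ∂μ := integral_congr_ae (hf.condExp_ae_eq (Nat.zero_le n))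

theorem Martingale.integral_limitProcess_of_norm_le (hf : Martingale f ℱ μ) {C : ℝ}
    (hC : ∀ n, ∀ᵐ ω ∂μ, ‖f n ω‖ ≤ C) :
    ∫ ω, ℱ.limitProcess f μ ω ∂μ = ∫ ω, f 0 ω ∂μ := by
  have h_tendsto : Tendsto (fun n => ∫ ω, f n ω ∂μ) atTop (𝓝 (∫ ω, ℱ.limitProcess f μ ω ∂μ)) :=
    tendsto_integral_of_dominated_convergence (fun _ => C)
      (fun n => (hf.integrable n).aestronglyMeasurable) (integrable_const C) hC
      (hf.submartingale.ae_tendsto_limitProcess_of_norm_le hC)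
  simp only [hf.integral_eq_integral_zero] at h_tendsto
  exact tendsto_nhds_unique h_tendsto tendsto_const_nhds

theorem tendsto_measureReal_of_le_condExp_abs_sub (hf : StronglyAdapted ℱ f)
    (hint : ∀ n, Integrable (f n) μ) {S : Set ℝ} (hS : MeasurableSet S) {c : ℝ} (hc : 0 < c)
    (hgap : ∀ᵐ ω ∂μ, ∀ n, f n ω ∈ S → c ≤ (μ[fun ω' => |f (n + 1) ω' - f n ω'| | ℱ n]) ω)
    (hL1 : Tendsto (fun n => ∫ ω, |f (n + 1) ω - f n ω| ∂μ) atTop (𝓝 0)) :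
    Tendsto (fun n => μ.real {ω | f n ω ∈ S}) atTop (𝓝 0) := by
  have h_le : ∀ n, μ.real {ω | f n ω ∈ S} ≤ c⁻¹ * ∫ ω, |f (n + 1) ω - f n ω| ∂μ := fun n => by
    rw [le_inv_mul_iff₀ hc]
    refine mul_measureReal_le_integral_of_le_condExp (ℱ.le n)
      ((hint (n + 1)).sub (hint n)).abs (ae_of_all _ fun ω => abs_nonneg _)
      ((hf n).measurable hS) ?_
    filter_upwards [hgap] with ω hω using hω n
  refine squeeze_zero (fun n => measureReal_nonneg) h_le ?_
  simpa using hL1.const_mul c⁻¹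

end MeasureTheory

/-- Let `(I_n)` be a `[0,1]`-valued martingale such that
`E[|I_{n+1} − I_n|] → 0` and such that there is `ε : (0,1/2) → (0,∞)` with:
almost surely, for every `n` and `δ`, if `I_n ∈ (δ, 1−δ)` then
`E[|I_{n+1} − I_n| | ℱ_n] ≥ ε(δ)/2`. Then `I_n` converges a.s. to a random
variable `I_∞` taking values in `{0,1}`, with `P[I_∞ = 1] = E[I_0]`. -/
theorem stmt18 {Ω : Type*} {m : MeasurableSpace Ω} (μ : Measure Ω)
    [IsProbabilityMeasure μ] (ℱ : Filtration ℕ m) (I : ℕ → Ω → ℝ)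
    (hmart : Martingale I ℱ μ)
    (hbdd : ∀ n, ∀ ω, I n ω ∈ Set.Icc (0 : ℝ) 1)
    (hL1 : Tendsto (fun n => ∫ ω, |I (n + 1) ω - I n ω| ∂μ) atTop (nhds 0))
    (ε : ℝ → ℝ) (hε : ∀ δ ∈ Set.Ioo (0 : ℝ) (1 / 2), 0 < ε δ)
    (hgap : ∀ᵐ ω ∂μ, ∀ n, ∀ δ ∈ Set.Ioo (0 : ℝ) (1 / 2),
      I n ω ∈ Set.Ioo δ (1 - δ) →
      ε δ / 2 ≤ (μ[fun ω' => |I (n + 1) ω' - I n ω'| | ℱ n]) ω) :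
    ∃ Ilim : Ω → ℝ,
      (∀ᵐ ω ∂μ, Tendsto (fun n => I n ω) atTop (nhds (Ilim ω))) ∧
      (∀ᵐ ω ∂μ, Ilim ω = 0 ∨ Ilim ω = 1) ∧
      (μ {ω | Ilim ω = 1}).toReal = ∫ ω, I 0 ω ∂μ := by
  have h_norm : ∀ n, ∀ᵐ ω ∂μ, ‖I n ω‖ ≤ 1 := fun n => ae_of_all _ fun ω =>
    abs_le.2 ⟨by linarith [(hbdd n ω).1], (hbdd n ω).2⟩
  have h_conv := hmart.submartingale.ae_tendsto_limitProcess_of_norm_le h_norm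
  have h_avoid : ∀ δ ∈ Ioo (0 : ℝ) (1 / 2), ∀ᵐ ω ∂μ, ℱ.limitProcess I μ ω ∉ Ioo δ (1 - δ) :=
    fun δ hδ => ae_notMem_of_tendsto_measureReal_zero h_conv isOpen_Ioo <|
      tendsto_measureReal_of_le_condExp_abs_sub hmart.stronglyAdapted hmart.integrable
        measurableSet_Ioo (half_pos (hε δ hδ)) (hgap.mono fun ω hω n => hω n δ hδ) hL1
  have h01 : ∀ᵐ ω ∂μ, ℱ.limitProcess I μ ω = 0 ∨ ℱ.limitProcess I μ ω = 1 := by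
    have h_mem : ∀ k : ℕ, 1 / ((k : ℝ) + 3) ∈ Ioo (0 : ℝ) (1 / 2) := fun k =>
      ⟨by positivity, by
        rw [div_lt_div_iff₀ (by positivity) two_pos]; linarith [k.cast_nonneg' (α := ℝ)]⟩
    filter_upwards [h_conv, ae_all_iff.2 fun k => h_avoid _ (h_mem k)] with ω hω h_out
    exact eq_zero_or_eq_one_of_forall_notMem_Ioo
      (isClosed_Icc.mem_of_tendsto hω (Eventually.of_forall fun n => hbdd n ω)) h_out
  refine ⟨ℱ.limitProcess I μ, h_conv, h01, ?_⟩
  rw [← measureReal_def, ← integral_eq_measureReal_of_ae_eq_zero_or_one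
    Filtration.stronglyMeasurable_limit_process'.measurable h01,
    hmart.integral_limitProcess_of_norm_le h_norm]
end
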